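/- arXiv:2506.23324 — 6 statements merged into one kernel-verified Lean document; each statement's English description precedes it below -/
import Mathlib

section
/- Let α > 0 and let N, M ∈ ℤ ∪ {−∞, +∞} with N < M. If {a_k} is a strongly decreasing sequence of positive reals (i.e. sup_k a_{k+1}/a_k < 1) and {b_k} is any sequence of positive reals, then Σ_{k=N}^{M} a_k (Σ_{i=N}^{k} b_i)^α is comparable, up to multiplicative constants depending only on α and the strong decrease constant, to Σ_{k=N}^{M} a_k b_k^α. -/
/-!
The lower bound is termwise, since `b_k` is one of the summands of `∑_{i ≤ k} b_i`.
For the upper bound let `a_k ≤ r^(k-i) a_i` with `r < 1`, put `s = r^(1/2)` and `t = s^(1/α)`.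
Writing `b_i = t^(k-i) · t^(i-k) b_i` and bounding the second factor by the `ℓ^α` norm of the
family gives `(∑_{i ≤ k} b_i)^α ≤ (1-t)^(-α) ∑_{i ≤ k} s^(i-k) b_i^α`. Multiplying by
`a_k ≤ s^(2(k-i)) a_i` leaves the weights `s^(k-i)`, and summing over `k` first costs `(1-s)⁻¹`.
-/

open ENNReal

/-- The set of integers `k` with `N ≤ k ≤ M`, where `N, M` are extended reals
(so that `N = -∞` or `M = +∞` are allowed). -/
def zset (N M : EReal) : Set ℤ := {k : ℤ | N ≤ ((k : ℝ) : EReal) ∧ ((k : ℝ) : EReal) ≤ M}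

open Set Function

namespace ENNReal

theorem tsum_mul_rpow_le {ι : Type*} (w y : ι → ℝ≥0∞) {p : ℝ} (hp : 0 < p) :
    (∑' i, w i * y i) ^ p ≤ (∑' i, w i) ^ p * ∑' i, y i ^ p := by
  set P := ∑' i, y i ^ p
  have hy (i : ι) : y i ≤ P ^ p⁻¹ := by
    rw [← rpow_rpow_inv hp.ne' (y i)]
    exact rpow_le_rpow (ENNReal.le_tsum i) (inv_nonneg.2 hp.le)
  calc (∑' i, w i * y i) ^ p ≤ ((∑' i, w i) * P ^ p⁻¹) ^ p := by
        rw [← ENNReal.tsum_mul_right]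
        exact rpow_le_rpow (ENNReal.tsum_le_tsum fun i => mul_le_mul_right (hy i) _) hp.le
    _ = (∑' i, w i) ^ p * P := by rw [mul_rpow_of_nonneg _ _ hp.le, rpow_inv_rpow hp.ne']

theorem tsum_pow_le_of_injective {ι : Type*} (x : ℝ≥0∞) {n : ι → ℕ} (hn : Injective n) :
    ∑' i, x ^ n i ≤ (1 - x)⁻¹ :=
  (tsum_comp_le_tsum_of_injective hn (x ^ ·)).trans_eq (tsum_geometric x)

theorem tsum_rpow_le_of_subset_Iic {T : Set ℤ} {k : ℤ} (hT : T ⊆ Iic k) {t : ℝ≥0∞}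
    (ht₀ : t ≠ 0) (ht : t ≠ ∞) (B : ℤ → ℝ≥0∞) {p : ℝ} (hp : 0 < p) :
    (∑' i : T, B i) ^ p ≤ ((1 - t)⁻¹) ^ p * ∑' i : T, ((t ^ p)⁻¹) ^ (k - i).toNat * B i ^ p := by
  have hinj : Injective fun i : T => (k - i).toNat := fun i j hij => by
    have hi := hT i.2
    have hj := hT j.2
    simp only [mem_Iic] at hi hj hij
    exact Subtype.ext (by omega)
  have hB (i : T) : B i = t ^ (k - i).toNat * ((t⁻¹) ^ (k - i).toNat * B i) := by
    rw [← mul_assoc, ← mul_pow, ENNReal.mul_inv_cancel ht₀ ht, one_pow, one_mul]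
  have hBp (i : T) :
      ((t⁻¹) ^ (k - i).toNat * B i) ^ p = ((t ^ p)⁻¹) ^ (k - i).toNat * B i ^ p := by
    rw [mul_rpow_of_nonneg _ _ hp.le, ← rpow_natCast_mul, mul_comm (_ : ℝ) p, rpow_mul_natCast,
      inv_rpow]
  calc (∑' i : T, B i) ^ p
      = (∑' i : T, t ^ (k - i).toNat * ((t⁻¹) ^ (k - i).toNat * B i)) ^ p := by
        rw [tsum_congr hB]
    _ ≤ (∑' i : T, t ^ (k - i).toNat) ^ p * ∑' i : T, ((t⁻¹) ^ (k - i).toNat * B i) ^ p :=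
        tsum_mul_rpow_le _ _ hp
    _ ≤ ((1 - t)⁻¹) ^ p * ∑' i : T, ((t ^ p)⁻¹) ^ (k - i).toNat * B i ^ p := by
        rw [tsum_congr hBp]
        gcongr
        exact tsum_pow_le_of_injective t hinj

theorem tsum_tsum_Iic_pow_mul_le (S : Set ℤ) (x : ℝ≥0∞) (c : ℤ → ℝ≥0∞) :
    ∑' k : S, ∑' i : ↥(S ∩ Iic k), x ^ ((k : ℤ) - i).toNat * c i ≤ (1 - x)⁻¹ * ∑' i : S, c i := by
  have hgeom (i : ℤ) : ∑' k, (if i ≤ k then x ^ (k - i).toNat else 0) ≤ (1 - x)⁻¹ := by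
    have hinj : Injective fun k : Ici i => (k - i).toNat := fun k l hkl => by
      have hk := k.2
      have hl := l.2
      simp only [mem_Ici] at hk hl hkl
      exact Subtype.ext (by omega)
    calc ∑' k, (if i ≤ k then x ^ (k - i).toNat else 0)
        = ∑' k : Ici i, x ^ ((k : ℤ) - i).toNat := by
          rw [tsum_subtype (Ici i) fun k => x ^ (k - i).toNat]
          simp only [indicator_apply, mem_Ici]
      _ ≤ (1 - x)⁻¹ := tsum_pow_le_of_injective x hinj
  calc ∑' k : S, ∑' i : ↥(S ∩ Iic k), x ^ ((k : ℤ) - i).toNat * c i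
      ≤ ∑' k, ∑' i : ↥(S ∩ Iic k), x ^ ((k : ℤ) - i).toNat * c i :=
        tsum_comp_le_tsum_of_injective Subtype.val_injective _
    _ = ∑' k, ∑' i, (if i ≤ k then x ^ (k - i).toNat else 0) * S.indicator c i := by
        refine tsum_congr fun k => ?_
        rw [tsum_subtype (S ∩ Iic k) fun i => x ^ ((k : ℤ) - i).toNat * c i]
        refine tsum_congr fun i => ?_
        by_cases hi : i ∈ S <;> by_cases hik : i ≤ k <;> simp [hi, hik]
    _ = ∑' i, (∑' k, if i ≤ k then x ^ (k - i).toNat else 0) * S.indicator c i := by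
        rw [ENNReal.tsum_comm]
        simp_rw [ENNReal.tsum_mul_right]
    _ ≤ ∑' i, (1 - x)⁻¹ * S.indicator c i := by
        gcongr with i
        exact hgeom i
    _ = (1 - x)⁻¹ * ∑' i : S, c i := by rw [ENNReal.tsum_mul_left, tsum_subtype]

theorem exists_tsum_mul_tsum_Iic_rpow_le {r : ℝ≥0∞} (hr₀ : r ≠ 0) (hr₁ : r < 1) {p : ℝ}
    (hp : 0 < p) :
    ∃ C : ℝ, 0 < C ∧ ∀ (S : Set ℤ) (A B : ℤ → ℝ≥0∞),
      (∀ i ∈ S, ∀ k ∈ S, i ≤ k → A k ≤ r ^ (k - i).toNat * A i) →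
      ∑' k : S, A k * (∑' i : ↥(S ∩ Iic (k : ℤ)), B i) ^ p ≤
        ENNReal.ofReal C * ∑' k : S, A k * B k ^ p := by
  set s := r ^ (2⁻¹ : ℝ)
  set t := s ^ p⁻¹
  have hs₀ : s ≠ 0 := by positivity
  have hs₁ : s < 1 := rpow_lt_one hr₁ (by norm_num)
  have ht₀ : t ≠ 0 := by positivity
  have ht₁ : t < 1 := rpow_lt_one hs₁ (inv_pos.2 hp)
  have hts : t ^ p = s := rpow_inv_rpow hp.ne' s
  have hss : s * s = r := by
    rw [← sq, ← rpow_natCast, ← rpow_mul]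
    norm_num
  have hrs : r * s⁻¹ = s := by rw [← hss, ENNReal.mul_inv_cancel_right hs₀ hs₁.ne_top]
  set D := ((1 - t)⁻¹) ^ p
  set C := D * (1 - s)⁻¹
  have ht' : (1 - t)⁻¹ ≠ ∞ := inv_ne_top.2 (tsub_pos_of_lt ht₁).ne'
  have hs' : (1 - s)⁻¹ ≠ ∞ := inv_ne_top.2 (tsub_pos_of_lt hs₁).ne'
  have hC : C ≠ ∞ := mul_ne_top (rpow_ne_top_of_nonneg hp.le ht') hs'
  have hC₀ : C ≠ 0 := mul_ne_zero
    (rpow_pos (ENNReal.inv_pos.2 (sub_ne_top one_ne_top)) ht').ne'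
    (ENNReal.inv_ne_zero.2 (sub_ne_top one_ne_top))
  refine ⟨C.toReal, toReal_pos hC₀ hC, fun S A B hA => ?_⟩
  have hterm (k : S) : A k * (∑' i : ↥(S ∩ Iic (k : ℤ)), B i) ^ p ≤
      D * ∑' i : ↥(S ∩ Iic (k : ℤ)), s ^ ((k : ℤ) - i).toNat * (A i * B i ^ p) := by
    calc A k * (∑' i : ↥(S ∩ Iic (k : ℤ)), B i) ^ p
        ≤ A k * (D * ∑' i : ↥(S ∩ Iic (k : ℤ)), (s⁻¹) ^ ((k : ℤ) - i).toNat * B i ^ p) := by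
          rw [← hts]
          gcongr
          exact tsum_rpow_le_of_subset_Iic inter_subset_right ht₀ ht₁.ne_top B hp
      _ = D * ∑' i : ↥(S ∩ Iic (k : ℤ)), A k * ((s⁻¹) ^ ((k : ℤ) - i).toNat * B i ^ p) := by
          rw [ENNReal.tsum_mul_left, mul_left_comm]
      _ ≤ D * ∑' i : ↥(S ∩ Iic (k : ℤ)), s ^ ((k : ℤ) - i).toNat * (A i * B i ^ p) := by
          gcongr _ * ∑' i, ?_ with i
          calc A k * ((s⁻¹) ^ ((k : ℤ) - i).toNat * B i ^ p)
              ≤ r ^ ((k : ℤ) - i).toNat * A i * ((s⁻¹) ^ ((k : ℤ) - i).toNat * B i ^ p) := by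
                gcongr
                exact hA i i.2.1 k k.2 i.2.2
            _ = (r * s⁻¹) ^ ((k : ℤ) - i).toNat * (A i * B i ^ p) := by ring
            _ = s ^ ((k : ℤ) - i).toNat * (A i * B i ^ p) := by rw [hrs]
  calc ∑' k : S, A k * (∑' i : ↥(S ∩ Iic (k : ℤ)), B i) ^ p
      ≤ ∑' k : S, D * ∑' i : ↥(S ∩ Iic (k : ℤ)), s ^ ((k : ℤ) - i).toNat * (A i * B i ^ p) :=
        ENNReal.tsum_le_tsum hterm
    _ ≤ D * ((1 - s)⁻¹ * ∑' k : S, A k * B k ^ p) := by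
        rw [ENNReal.tsum_mul_left]
        gcongr
        exact tsum_tsum_Iic_pow_mul_le S s fun i => A i * B i ^ p
    _ = ENNReal.ofReal C.toReal * ∑' k : S, A k * B k ^ p := by rw [ofReal_toReal hC, mul_assoc]

end ENNReal

theorem Set.OrdConnected.le_pow_mul_of_le_mul_succ {S : Set ℤ} (hS : S.OrdConnected)
    {f : ℤ → ℝ≥0∞} {r : ℝ≥0∞} (hf : ∀ k ∈ S, k + 1 ∈ S → f (k + 1) ≤ r * f k) {i j : ℤ}
    (hi : i ∈ S) (hj : j ∈ S) (hij : i ≤ j) : f j ≤ r ^ (j - i).toNat * f i := by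
  induction j, hij using Int.leInduction with
  | base => simp
  | succ j hij ih =>
    have hjS : j ∈ S := hS.out hi hj ⟨hij, by omega⟩
    calc f (j + 1) ≤ r * f j := hf j hjS hj
      _ ≤ r * (r ^ (j - i).toNat * f i) := by gcongr; exact ih hjS
      _ = r ^ (j + 1 - i).toNat * f i := by
        rw [show (j + 1 - i).toNat = (j - i).toNat + 1 by omega, pow_succ']
        ring

theorem zset_ordConnected (N M : EReal) : (zset N M).OrdConnected :=
  ordConnected_Icc.preimage_mono fun i j hij => by exact_mod_cast hij

theorem zset_coe_eq_inter_Iic {N M : EReal} {k : ℤ} (hk : k ∈ zset N M) :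
    zset N ((k : ℝ) : EReal) = zset N M ∩ Iic k := by
  ext i
  simp only [zset, mem_inter_iff, mem_ofPred_eq, mem_Iic, EReal.coe_le_coe_iff, Int.cast_le]
  exact ⟨fun ⟨hN, hik⟩ => ⟨⟨hN, (EReal.coe_le_coe_iff.2 (Int.cast_le.2 hik)).trans hk.2⟩, hik⟩,
    fun ⟨⟨hN, _⟩, hik⟩ => ⟨hN, hik⟩⟩

theorem sum_partial_sum_power_of_strongly_decreasing (α ρ : ℝ) (hα : 0 < α) (hρ : ρ < 1) :
    ∃ c C : ℝ, 0 < c ∧ 0 < C ∧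
      ∀ (N M : EReal), N < M → ∀ (a b : ℤ → ℝ),
        (∀ k, 0 < a k) → (∀ k, 0 < b k) →
        (∀ k : ℤ, k ∈ zset N M → (k + 1) ∈ zset N M → a (k + 1) ≤ ρ * a k) →
        ENNReal.ofReal c *
            (∑' k : zset N M, ENNReal.ofReal (a (k : ℤ)) * ENNReal.ofReal (b (k : ℤ)) ^ α) ≤
          (∑' k : zset N M, ENNReal.ofReal (a (k : ℤ)) *
              (∑' i : zset N (((k : ℤ) : ℝ) : EReal), ENNReal.ofReal (b (i : ℤ))) ^ α) ∧
        (∑' k : zset N M, ENNReal.ofReal (a (k : ℤ)) *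
            (∑' i : zset N (((k : ℤ) : ℝ) : EReal), ENNReal.ofReal (b (i : ℤ))) ^ α) ≤
          ENNReal.ofReal C *
            (∑' k : zset N M, ENNReal.ofReal (a (k : ℤ)) * ENNReal.ofReal (b (k : ℤ)) ^ α) := by
  set r := ENNReal.ofReal (max ρ 2⁻¹)
  have hr₀ : r ≠ 0 := by simp [r]
  have hr₁ : r < 1 := ofReal_lt_one.2 (max_lt hρ (by norm_num))
  obtain ⟨C, hC, hle⟩ := exists_tsum_mul_tsum_Iic_rpow_le hr₀ hr₁ hα
  refine ⟨1, C, one_pos, hC, fun N M _ a b ha _ hdec => ⟨?_, ?_⟩⟩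
  · rw [ofReal_one, one_mul]
    refine ENNReal.tsum_le_tsum fun k => ?_
    gcongr
    exact ENNReal.le_tsum (⟨k, k.2.1, le_rfl⟩ : zset N ((k : ℤ) : ℝ))
  · have hstep : ∀ k ∈ zset N M, k + 1 ∈ zset N M →
        ENNReal.ofReal (a (k + 1)) ≤ r * ENNReal.ofReal (a k) := fun k hk hk₁ => by
      rw [← ofReal_mul (le_max_of_le_right (by norm_num))]
      refine ofReal_le_ofReal ((hdec k hk hk₁).trans ?_)
      gcongr
      exacts [(ha k).le, le_max_left _ _]
    calc _ = ∑' k : zset N M, ENNReal.ofReal (a k) *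
            (∑' i : ↥(zset N M ∩ Iic (k : ℤ)), ENNReal.ofReal (b i)) ^ α :=
          tsum_congr fun k => by rw [zset_coe_eq_inter_Iic k.2]
      _ ≤ _ := hle _ _ (fun k => ENNReal.ofReal (b k)) fun i hi k hk =>
          (zset_ordConnected N M).le_pow_mul_of_le_mul_succ hstep hi hk
end

section
/- Let α > 0 and let {a_k} be a strongly decreasing sequence of positive reals and {b_k} any positive sequence (indexed N ≤ k ≤ M). Then sup_{N ≤ k ≤ M} a_k (Σ_{i=N}^{k} b_i)^α ≈ sup_{N ≤ k ≤ M} a_k b_k^α, with equivalence constants depending only on α and the strong decrease ratio. -/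
open ENNReal

theorem sup_partial_sum_power_of_strongly_decreasing (α ρ : ℝ) (hα : 0 < α) (hρ : ρ < 1) :
    ∃ c C : ℝ, 0 < c ∧ 0 < C ∧
      ∀ (N M : EReal), N < M → ∀ (a b : ℤ → ℝ),
        (∀ k, 0 < a k) → (∀ k, 0 < b k) →
        (∀ k : ℤ, k ∈ zset N M → (k + 1) ∈ zset N M → a (k + 1) ≤ ρ * a k) →
        ENNReal.ofReal c *
            (⨆ k : zset N M, ENNReal.ofReal (a (k : ℤ)) * ENNReal.ofReal (b (k : ℤ)) ^ α) ≤
          (⨆ k : zset N M, ENNReal.ofReal (a (k : ℤ)) *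
              (∑' i : zset N (((k : ℤ) : ℝ) : EReal), ENNReal.ofReal (b (i : ℤ))) ^ α) ∧
        (⨆ k : zset N M, ENNReal.ofReal (a (k : ℤ)) *
            (∑' i : zset N (((k : ℤ) : ℝ) : EReal), ENNReal.ofReal (b (i : ℤ))) ^ α) ≤
          ENNReal.ofReal C *
            (⨆ k : zset N M, ENNReal.ofReal (a (k : ℤ)) * ENNReal.ofReal (b (k : ℤ)) ^ α) := by
  set σ : ℝ := max ρ (1/2) with hσdef
  have hσ0 : (0:ℝ) < σ := lt_of_lt_of_le (by norm_num) (le_max_right ρ (1/2))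
  have hσ1 : σ < 1 := max_lt hρ (by norm_num)
  set r : ℝ := σ ^ (1/α) with hrdef
  have hr0 : 0 < r := Real.rpow_pos_of_pos hσ0 _
  have hr1 : r < 1 := Real.rpow_lt_one hσ0.le hσ1 (by positivity)
  have h1r : 0 < 1 - r := by linarith
  refine ⟨1, ((1 - r)⁻¹) ^ α, one_pos, Real.rpow_pos_of_pos (by positivity) _, ?_⟩
  intro N M hNM a b ha hb hdec
  -- membership facts
  have hbetween : ∀ {i m j : ℤ}, i ∈ zset N M → j ∈ zset N M → i ≤ m → m ≤ j →
      m ∈ zset N M := by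
    intro i m j hi hj him hmj
    refine ⟨le_trans hi.1 ?_, le_trans ?_ hj.2⟩
    · exact EReal.coe_le_coe_iff.mpr (by exact_mod_cast him)
    · exact EReal.coe_le_coe_iff.mpr (by exact_mod_cast hmj)
  -- strong decrease iterated
  have hσdecN : ∀ (n : ℕ) (i : ℤ), i ∈ zset N M → (i + n) ∈ zset N M →
      a (i + n) ≤ σ ^ n * a i := by
    intro n
    induction n with
    | zero => intro i hi _; simp
    | succ n ih =>
      intro i hi hin
      have hin' : (i + ((n+1:ℕ):ℤ) : ℤ) = (i + n) + 1 := by push_cast; ring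
      rw [hin'] at hin ⊢
      have hmem : (i + n : ℤ) ∈ zset N M := hbetween hi hin (by omega) (by omega)
      calc a ((i+n)+1) ≤ ρ * a (i+n) := hdec _ hmem hin
        _ ≤ σ * a (i+n) := mul_le_mul_of_nonneg_right (le_max_left _ _) (ha _).le
        _ ≤ σ * (σ^n * a i) := mul_le_mul_of_nonneg_left (ih i hi hmem) hσ0.le
        _ = σ^(n+1) * a i := by ring
  have hσdec : ∀ i j : ℤ, i ∈ zset N M → j ∈ zset N M → i ≤ j →
      a j ≤ σ ^ (j - i).toNat * a i := by
    intro i j hi hj hij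
    have hji : i + (((j - i).toNat : ℕ) : ℤ) = j := by omega
    have h := hσdecN (j - i).toNat i hi (by rw [hji]; exact hj)
    rwa [hji] at h
  set S := ⨆ k : zset N M, ENNReal.ofReal (a (k : ℤ)) * ENNReal.ofReal (b (k : ℤ)) ^ α with hS
  constructor
  · -- lower bound
    rw [ENNReal.ofReal_one, one_mul]
    refine iSup_mono fun k => ?_
    refine mul_le_mul_right (ENNReal.rpow_le_rpow ?_ hα.le) _
    exact ENNReal.le_tsum (⟨(k:ℤ), ⟨k.2.1, le_refl _⟩⟩ : zset N (((k : ℤ) : ℝ) : EReal))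
  · -- upper bound
    refine iSup_le fun k => ?_
    set T : ℝ≥0∞ := S ^ (1/α) * ENNReal.ofReal ((a (k:ℤ))⁻¹) ^ (1/α) with hT
    have hbi : ∀ i : zset N (((k : ℤ) : ℝ) : EReal),
        ENNReal.ofReal (b (i:ℤ)) ≤ T * ENNReal.ofReal r ^ ((k:ℤ) - (i:ℤ)).toNat := by
      intro i
      have hik : (i:ℤ) ≤ (k:ℤ) := by exact_mod_cast EReal.coe_le_coe_iff.mp i.2.2
      have him : (i:ℤ) ∈ zset N M := ⟨i.2.1, le_trans i.2.2 k.2.2⟩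
      set n : ℕ := ((k:ℤ) - (i:ℤ)).toNat with hn
      have hstep1 : ENNReal.ofReal (a (i:ℤ)) * ENNReal.ofReal (b (i:ℤ)) ^ α ≤ S :=
        le_iSup (fun k : zset N M => ENNReal.ofReal (a (k:ℤ)) * ENNReal.ofReal (b (k:ℤ)) ^ α)
          ⟨(i:ℤ), him⟩
      have hcancel : ENNReal.ofReal ((a (i:ℤ))⁻¹) * ENNReal.ofReal (a (i:ℤ)) = 1 := by
        rw [← ENNReal.ofReal_mul (inv_nonneg.mpr (ha _).le), inv_mul_cancel₀ (ha _).ne', ENNReal.ofReal_one]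
      have hstep2 : ENNReal.ofReal (b (i:ℤ)) ^ α ≤ S * ENNReal.ofReal ((a (i:ℤ))⁻¹) := by
        calc ENNReal.ofReal (b (i:ℤ)) ^ α
            = ENNReal.ofReal ((a (i:ℤ))⁻¹) * (ENNReal.ofReal (a (i:ℤ)) * ENNReal.ofReal (b (i:ℤ)) ^ α) := by
              rw [← mul_assoc, hcancel, one_mul]
          _ ≤ ENNReal.ofReal ((a (i:ℤ))⁻¹) * S := mul_le_mul_right hstep1 _
          _ = S * ENNReal.ofReal ((a (i:ℤ))⁻¹) := mul_comm _ _
      have hstep3 : ENNReal.ofReal (b (i:ℤ)) ≤ (S * ENNReal.ofReal ((a (i:ℤ))⁻¹)) ^ (1/α) := by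
        have := ENNReal.rpow_le_rpow hstep2 (le_of_lt (by positivity : (0:ℝ) < 1/α))
        rwa [← ENNReal.rpow_mul, mul_one_div_cancel hα.ne', ENNReal.rpow_one] at this
      have hstep4 : (a (i:ℤ))⁻¹ ≤ σ ^ n * (a (k:ℤ))⁻¹ := by
        have h := hσdec (i:ℤ) (k:ℤ) him k.2 hik
        rw [← one_div, ← div_eq_mul_inv, div_le_div_iff₀ (ha _) (ha _)]
        nlinarith [ha (i:ℤ), ha (k:ℤ)]
      have hσr : ((σ ^ n : ℝ)) ^ (1/α) = r ^ n := by
        rw [← Real.rpow_natCast σ n, ← Real.rpow_mul hσ0.le, mul_comm,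
          Real.rpow_mul hσ0.le, Real.rpow_natCast]
      calc ENNReal.ofReal (b (i:ℤ))
          ≤ (S * ENNReal.ofReal ((a (i:ℤ))⁻¹)) ^ (1/α) := hstep3
        _ ≤ (S * (ENNReal.ofReal (σ ^ n) * ENNReal.ofReal ((a (k:ℤ))⁻¹))) ^ (1/α) := by
            refine ENNReal.rpow_le_rpow (mul_le_mul_right ?_ S) (by positivity)
            rw [← ENNReal.ofReal_mul (by positivity)]
            exact ENNReal.ofReal_le_ofReal hstep4
        _ = T * ENNReal.ofReal r ^ n := by
            rw [ENNReal.mul_rpow_of_nonneg _ _ (by positivity : (0:ℝ) ≤ 1/α),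
              ENNReal.mul_rpow_of_nonneg _ _ (by positivity : (0:ℝ) ≤ 1/α),
              ENNReal.ofReal_rpow_of_pos (by positivity), hσr, hT,
              ENNReal.ofReal_pow hr0.le]
            ring
    have hinj : Function.Injective
        (fun i : zset N (((k : ℤ) : ℝ) : EReal) => ((k:ℤ) - (i:ℤ)).toNat) := by
      intro i j hij
      have hi : (i:ℤ) ≤ (k:ℤ) := by exact_mod_cast EReal.coe_le_coe_iff.mp i.2.2
      have hj : (j:ℤ) ≤ (k:ℤ) := by exact_mod_cast EReal.coe_le_coe_iff.mp j.2.2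
      simp only at hij
      exact Subtype.ext (by omega)
    have hsum : (∑' i : zset N (((k : ℤ) : ℝ) : EReal), ENNReal.ofReal (b (i:ℤ)))
        ≤ T * (1 - ENNReal.ofReal r)⁻¹ := by
      calc (∑' i : zset N (((k : ℤ) : ℝ) : EReal), ENNReal.ofReal (b (i:ℤ)))
          ≤ ∑' i : zset N (((k : ℤ) : ℝ) : EReal),
              T * ENNReal.ofReal r ^ ((k:ℤ) - (i:ℤ)).toNat := ENNReal.tsum_le_tsum hbi
        _ ≤ ∑' n : ℕ, T * ENNReal.ofReal r ^ n :=
            ENNReal.tsum_comp_le_tsum_of_injective hinj (fun n => T * ENNReal.ofReal r ^ n)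
        _ = T * ∑' n : ℕ, ENNReal.ofReal r ^ n := ENNReal.tsum_mul_left
        _ = T * (1 - ENNReal.ofReal r)⁻¹ := by rw [ENNReal.tsum_geometric]
    have hcancelk : ENNReal.ofReal (a (k:ℤ)) * ENNReal.ofReal ((a (k:ℤ))⁻¹) = 1 := by
      rw [← ENNReal.ofReal_mul (ha _).le, mul_inv_cancel₀ (ha _).ne', ENNReal.ofReal_one]
    have hCeq : ((1 - ENNReal.ofReal r)⁻¹) ^ α = ENNReal.ofReal (((1 - r)⁻¹) ^ α) := by
      rw [← ENNReal.ofReal_one, ← ENNReal.ofReal_sub _ hr0.le,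
        ← ENNReal.ofReal_inv_of_pos h1r, ENNReal.ofReal_rpow_of_pos (by positivity)]
    calc ENNReal.ofReal (a (k:ℤ)) *
          (∑' i : zset N (((k : ℤ) : ℝ) : EReal), ENNReal.ofReal (b (i:ℤ))) ^ α
        ≤ ENNReal.ofReal (a (k:ℤ)) * (T * (1 - ENNReal.ofReal r)⁻¹) ^ α :=
          mul_le_mul_right (ENNReal.rpow_le_rpow hsum hα.le) _
      _ = ENNReal.ofReal (a (k:ℤ)) *
            (S * ENNReal.ofReal ((a (k:ℤ))⁻¹) * ((1 - ENNReal.ofReal r)⁻¹) ^ α) := by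
          rw [hT, ENNReal.mul_rpow_of_nonneg _ _ hα.le, ENNReal.mul_rpow_of_nonneg _ _ hα.le,
            ← ENNReal.rpow_mul, ← ENNReal.rpow_mul, one_div_mul_cancel hα.ne',
            ENNReal.rpow_one, ENNReal.rpow_one]
      _ = ENNReal.ofReal (((1 - r)⁻¹) ^ α) * S := by
          rw [← hCeq]
          calc ENNReal.ofReal (a (k:ℤ)) *
                (S * ENNReal.ofReal ((a (k:ℤ))⁻¹) * ((1 - ENNReal.ofReal r)⁻¹) ^ α)
              = (ENNReal.ofReal (a (k:ℤ)) * ENNReal.ofReal ((a (k:ℤ))⁻¹)) *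
                  (((1 - ENNReal.ofReal r)⁻¹) ^ α * S) := by ring
            _ = ((1 - ENNReal.ofReal r)⁻¹) ^ α * S := by rw [hcancelk, one_mul]
      _ ≤ ENNReal.ofReal (((1 - r)⁻¹) ^ α) * S := le_refl _
end

section
/- Let α > 0 and let {a_k} be a strongly increasing sequence of positive reals (inf_k a_{k+1}/a_k > 1) and {b_k} any positive sequence (indexed N ≤ k ≤ M). Then Σ_{k=N}^{M} a_k (Σ_{i=k}^{M} b_i)^α ≈ Σ_{k=N}^{M} a_k b_k^α, with equivalence constants depending only on α and the increase ratio. -/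
/-!
The lower bound holds with constant `1`, since each tail sum dominates its first term.
For the upper bound write `ρ = r²`. If `T = ∑ₙ rⁿ fₙ^α`, then `fₙ ≤ r^(-n/α) T^(1/α)`, and summing
this geometric bound gives `(∑ₙ fₙ)^α ≲ ∑ₙ rⁿ fₙ^α`; for the tails,
`(∑_{i ≥ k} b_i)^α ≲ ∑_{i ≥ k} r^(i-k) b_i^α`. After exchanging the order of summation the
coefficient of `b_i^α` is `∑_{k ≤ i} a_k r^(i-k) ≤ a_i ∑ₙ r^(-n)`, because `a_k ≤ r^(-2(i-k)) a_i`.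
-/

open ENNReal

open scoped NNReal

theorem pow_mul_le_of_mul_le_succ {R : Type*} [CommMonoid R] [PartialOrder R] [MulLeftMono R]
    {Z : Set ℤ} [Z.OrdConnected] {ρ : R} {a : ℤ → R}
    (ha : ∀ k ∈ Z, k + 1 ∈ Z → ρ * a k ≤ a (k + 1)) {k : ℤ} (hk : k ∈ Z) :
    ∀ n : ℕ, k + n ∈ Z → ρ ^ n * a k ≤ a (k + n)
  | 0, _ => by simp
  | n + 1, hkn => by
    have hkn' : k + n ∈ Z := Set.OrdConnected.out ‹_› hk hkn ⟨by omega, by omega⟩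
    calc ρ ^ (n + 1) * a k = ρ * (ρ ^ n * a k) := by rw [pow_succ', mul_assoc]
      _ ≤ ρ * a (k + n) := mul_le_mul_right (pow_mul_le_of_mul_le_succ ha hk n hkn') ρ
      _ ≤ a (k + (n + 1 : ℕ)) := by
        rw [Nat.cast_succ, ← add_assoc]
        exact ha _ hkn' (by rwa [Nat.cast_succ, ← add_assoc] at hkn)

namespace ENNReal

theorem rpow_pow_comm (x : ℝ≥0∞) (y : ℝ) (n : ℕ) : (x ^ y) ^ n = (x ^ n) ^ y := by
  rw [← rpow_mul_natCast, mul_comm, rpow_natCast_mul]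

theorem one_le_inv_one_sub (q : ℝ≥0∞) : 1 ≤ (1 - q)⁻¹ :=
  ENNReal.one_le_inv.2 tsub_le_self

theorem inv_one_sub_inv_ne_top {x : ℝ≥0∞} (hx : 1 < x) : (1 - x⁻¹)⁻¹ ≠ ⊤ := by
  rw [← ENNReal.tsum_geometric]
  exact (tsum_geometric_lt_top.2 (ENNReal.inv_lt_one.2 hx)).ne

theorem tsum_le_of_le_pow_mul {q T : ℝ≥0∞} {f : ℕ → ℝ≥0∞} (h : ∀ n, f n ≤ q ^ n * T) :
    ∑' n, f n ≤ (1 - q)⁻¹ * T :=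
  (ENNReal.tsum_le_tsum h).trans_eq (by rw [ENNReal.tsum_mul_right, ENNReal.tsum_geometric])

theorem rpow_tsum_le_mul_tsum_pow_mul_rpow {α : ℝ} (hα : 0 < α) {r : ℝ≥0} (hr : 1 < r)
    (f : ℕ → ℝ≥0∞) :
    (∑' n, f n) ^ α ≤
      (1 - ((r : ℝ≥0∞) ^ α⁻¹)⁻¹)⁻¹ ^ α * ∑' n, (r : ℝ≥0∞) ^ n * f n ^ α := by
  set t : ℝ≥0∞ := (r : ℝ≥0∞) ^ α⁻¹
  set T := ∑' n, (r : ℝ≥0∞) ^ n * f n ^ α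
  have ht0 : t ≠ 0 := (ENNReal.one_lt_rpow (by exact_mod_cast hr) (inv_pos.2 hα)).ne_bot
  have htop : t ≠ ⊤ := ENNReal.rpow_ne_top_of_nonneg (inv_nonneg.2 hα.le) coe_ne_top
  have hf : ∀ n, f n ≤ t⁻¹ ^ n * T ^ α⁻¹ := fun n =>
    calc f n = t⁻¹ ^ n * (t ^ n * f n) := by
          rw [← mul_assoc, ← mul_pow, ENNReal.inv_mul_cancel ht0 htop, one_pow, one_mul]
      _ = t⁻¹ ^ n * ((r : ℝ≥0∞) ^ n * f n ^ α) ^ α⁻¹ := by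
          rw [ENNReal.mul_rpow_of_nonneg _ _ (inv_nonneg.2 hα.le), ENNReal.rpow_rpow_inv hα.ne',
            rpow_pow_comm]
      _ ≤ t⁻¹ ^ n * T ^ α⁻¹ := by
          gcongr
          exact ENNReal.le_tsum (f := fun n => (r : ℝ≥0∞) ^ n * f n ^ α) n
  calc (∑' n, f n) ^ α ≤ ((1 - t⁻¹)⁻¹ * T ^ α⁻¹) ^ α := by
        gcongr
        exact tsum_le_of_le_pow_mul hf
    _ = (1 - t⁻¹)⁻¹ ^ α * T := by
        rw [ENNReal.mul_rpow_of_nonneg _ _ hα.le, ENNReal.rpow_inv_rpow hα.ne']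

theorem tsum_mul_tsum_indicator_add_le {Z : Set ℤ} {a b : ℤ → ℝ≥0∞} {w : ℕ → ℝ≥0∞}
    {q : ℝ≥0∞} (h : ∀ k ∈ Z, ∀ n : ℕ, k + n ∈ Z → a k * w n ≤ q ^ n * a (k + n)) :
    ∑' k : Z, a k * ∑' n : ℕ, w n * Z.indicator b (k + n) ≤
      (1 - q)⁻¹ * ∑' k : Z, a k * b k := by
  set g : ℤ → ℝ≥0∞ := Z.indicator fun i => a i * b i
  have hterm : ∀ (k : Z) (n : ℕ), a k * (w n * Z.indicator b (k + n)) ≤ q ^ n * g (k + n) := by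
    intro k n
    by_cases hkn : (k : ℤ) + n ∈ Z
    · simp only [g, Set.indicator_of_mem hkn]
      calc a k * (w n * b (k + n)) = a k * w n * b (k + n) := (mul_assoc _ _ _).symm
        _ ≤ q ^ n * a (k + n) * b (k + n) := mul_le_mul_left (h k k.2 n hkn) _
        _ = q ^ n * (a (k + n) * b (k + n)) := mul_assoc _ _ _
    · simp [Set.indicator_of_notMem hkn]
  calc ∑' k : Z, a k * ∑' n : ℕ, w n * Z.indicator b (k + n)
      = ∑' (k : Z) (n : ℕ), a k * (w n * Z.indicator b (k + n)) := by
        simp_rw [ENNReal.tsum_mul_left]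
    _ ≤ ∑' (k : Z) (n : ℕ), q ^ n * g (k + n) :=
        ENNReal.tsum_le_tsum fun k => ENNReal.tsum_le_tsum (hterm k)
    _ ≤ ∑' (k : ℤ) (n : ℕ), q ^ n * g (k + n) :=
        ENNReal.tsum_comp_le_tsum_of_injective Subtype.val_injective
          fun k => ∑' n : ℕ, q ^ n * g (k + n)
    _ = ∑' n : ℕ, q ^ n * ∑' k : ℤ, g (k + n) := by
        rw [ENNReal.tsum_comm]
        simp_rw [ENNReal.tsum_mul_left]
    _ = ∑' n : ℕ, q ^ n * ∑' k : Z, a k * b k := by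
        simp_rw [tsum_subtype Z fun i => a i * b i]
        exact tsum_congr fun n => congrArg _ ((Equiv.addRight (n : ℤ)).tsum_eq g)
    _ = (1 - q)⁻¹ * ∑' k : Z, a k * b k := by
        rw [ENNReal.tsum_mul_right, ENNReal.tsum_geometric]

theorem tsum_mul_rpow_tsum_indicator_add_le {Z : Set ℤ} [Z.OrdConnected] {α : ℝ}
    (hα : 0 < α) {r : ℝ≥0} (hr : 1 < r) {a : ℤ → ℝ≥0∞}
    (ha : ∀ k ∈ Z, k + 1 ∈ Z → (r : ℝ≥0∞) ^ 2 * a k ≤ a (k + 1)) (b : ℤ → ℝ≥0∞) :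
    ∑' k : Z, a k * (∑' n : ℕ, Z.indicator b (k + n)) ^ α ≤
      (1 - ((r : ℝ≥0∞) ^ α⁻¹)⁻¹)⁻¹ ^ α * (1 - (r : ℝ≥0∞)⁻¹)⁻¹ * ∑' k : Z, a k * b k ^ α := by
  set C := (1 - ((r : ℝ≥0∞) ^ α⁻¹)⁻¹)⁻¹ ^ α
  have hr0 : (r : ℝ≥0∞) ≠ 0 := coe_ne_zero.2 (zero_lt_one.trans hr).ne'
  have hgrowth : ∀ k ∈ Z, ∀ n : ℕ, k + n ∈ Z →
      a k * (r : ℝ≥0∞) ^ n ≤ (r : ℝ≥0∞)⁻¹ ^ n * a (k + n) := by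
    intro k hk n hkn
    calc a k * (r : ℝ≥0∞) ^ n = (r : ℝ≥0∞)⁻¹ ^ n * (((r : ℝ≥0∞) ^ 2) ^ n * a k) := by
          rw [← pow_mul, pow_mul', sq, ← mul_assoc, ← mul_assoc, ← mul_pow,
            ENNReal.inv_mul_cancel hr0 coe_ne_top, one_pow, one_mul, mul_comm]
      _ ≤ (r : ℝ≥0∞)⁻¹ ^ n * a (k + n) := by
          gcongr
          exact pow_mul_le_of_mul_le_succ ha hk n hkn
  have hrpow : ∀ (k : ℤ) (n : ℕ), Z.indicator b (k + n) ^ α = Z.indicator (b · ^ α) (k + n) :=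
    fun k n => (congrFun (Set.indicator_comp_of_zero (g := (· ^ α))
      (ENNReal.zero_rpow_of_pos hα)) (k + n)).symm
  calc ∑' k : Z, a k * (∑' n : ℕ, Z.indicator b (k + n)) ^ α
      ≤ ∑' k : Z, a k * (C * ∑' n : ℕ, (r : ℝ≥0∞) ^ n * Z.indicator b (k + n) ^ α) :=
        ENNReal.tsum_le_tsum fun k => by
          gcongr
          exact rpow_tsum_le_mul_tsum_pow_mul_rpow hα hr _
    _ = C * ∑' k : Z, a k * ∑' n : ℕ, (r : ℝ≥0∞) ^ n * Z.indicator (b · ^ α) (k + n) := by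
        rw [← ENNReal.tsum_mul_left]
        simp_rw [hrpow, mul_left_comm C]
    _ ≤ C * ((1 - (r : ℝ≥0∞)⁻¹)⁻¹ * ∑' k : Z, a k * b k ^ α) := by
        gcongr
        exact tsum_mul_tsum_indicator_add_le hgrowth
    _ = C * (1 - (r : ℝ≥0∞)⁻¹)⁻¹ * ∑' k : Z, a k * b k ^ α := (mul_assoc _ _ _).symm

end ENNReal

instance zset.ordConnected (N M : EReal) : (zset N M).OrdConnected :=
  ⟨fun _ hi _ hj _ hk =>
    ⟨hi.1.trans (by exact_mod_cast hk.1), (by exact_mod_cast hk.2 : _ ≤ _).trans hj.2⟩⟩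

theorem tsum_zset_eq_tsum_indicator_add {N M : EReal} {k : ℤ} (hk : k ∈ zset N M)
    (f : ℤ → ℝ≥0∞) :
    ∑' i : zset (k : ℝ) M, f i = ∑' n : ℕ, (zset N M).indicator f (k + n) := by
  have hmem : ∀ n : ℕ, k + n ∈ zset (k : ℝ) M ↔ k + n ∈ zset N M := fun n => by
    have hle : ((k : ℝ) : EReal) ≤ ((k + n : ℤ) : ℝ) := by
      exact_mod_cast le_add_of_nonneg_right n.cast_nonneg
    exact ⟨fun h => ⟨hk.1.trans hle, h.2⟩, fun h => ⟨hle, h.2⟩⟩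
  rw [tsum_subtype, ← Function.Injective.tsum_eq (g := fun n : ℕ => k + n)]
  · exact tsum_congr fun n => Set.indicator_eq_indicator (hmem n) rfl
  · exact fun m n h => by simpa using h
  · intro i hi
    have hki : k ≤ i := by exact_mod_cast (Set.mem_of_indicator_ne_zero hi).1
    exact ⟨(i - k).toNat, by change k + ((i - k).toNat : ℤ) = i; omega⟩

theorem sum_tail_sum_power_of_strongly_increasing (α ρ : ℝ) (hα : 0 < α) (hρ : 1 < ρ) :
    ∃ c C : ℝ, 0 < c ∧ 0 < C ∧
      ∀ (N M : EReal), N < M → ∀ (a b : ℤ → ℝ),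
        (∀ k, 0 < a k) → (∀ k, 0 < b k) →
        (∀ k : ℤ, k ∈ zset N M → (k + 1) ∈ zset N M → ρ * a k ≤ a (k + 1)) →
        ENNReal.ofReal c *
            (∑' k : zset N M, ENNReal.ofReal (a (k : ℤ)) * ENNReal.ofReal (b (k : ℤ)) ^ α) ≤
          (∑' k : zset N M, ENNReal.ofReal (a (k : ℤ)) *
              (∑' i : zset (((k : ℤ) : ℝ) : EReal) M, ENNReal.ofReal (b (i : ℤ))) ^ α) ∧
        (∑' k : zset N M, ENNReal.ofReal (a (k : ℤ)) *
            (∑' i : zset (((k : ℤ) : ℝ) : EReal) M, ENNReal.ofReal (b (i : ℤ))) ^ α) ≤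
          ENNReal.ofReal C *
            (∑' k : zset N M, ENNReal.ofReal (a (k : ℤ)) * ENNReal.ofReal (b (k : ℤ)) ^ α) := by
  obtain ⟨r, hr, hr2⟩ : ∃ r : ℝ≥0, 1 < r ∧ (r : ℝ≥0∞) ^ 2 = ENNReal.ofReal ρ :=
    ⟨NNReal.sqrt ρ.toNNReal,
      by rw [← NNReal.sqrt_one, NNReal.sqrt_lt_sqrt]; exact Real.one_lt_toNNReal.2 hρ,
      by rw [← ENNReal.coe_pow, NNReal.sq_sqrt]; rfl⟩
  have hr1 : 1 < (r : ℝ≥0∞) := by exact_mod_cast hr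
  set K := (1 - ((r : ℝ≥0∞) ^ α⁻¹)⁻¹)⁻¹ ^ α * (1 - (r : ℝ≥0∞)⁻¹)⁻¹
  have hK : K ≠ ⊤ := mul_ne_top
    (rpow_ne_top_of_nonneg hα.le (inv_one_sub_inv_ne_top (one_lt_rpow hr1 (inv_pos.2 hα))))
    (inv_one_sub_inv_ne_top hr1)
  have hK0 : K ≠ 0 := (one_pos.trans_le (one_le_mul
    (one_le_rpow (one_le_inv_one_sub _) hα) (one_le_inv_one_sub _))).ne'
  refine ⟨1, K.toReal, one_pos, toReal_pos hK0 hK, fun N M _ a b _ _ ha => ⟨?_, ?_⟩⟩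
  · rw [ENNReal.ofReal_one, one_mul]
    refine ENNReal.tsum_le_tsum fun k => ?_
    gcongr
    exact ENNReal.le_tsum (⟨k, le_rfl, k.2.2⟩ : zset (((k : ℤ) : ℝ) : EReal) M)
  · have hA : ∀ k ∈ zset N M, k + 1 ∈ zset N M →
        (r : ℝ≥0∞) ^ 2 * ENNReal.ofReal (a k) ≤ ENNReal.ofReal (a (k + 1)) := fun k hk hk1 => by
      rw [hr2, ← ENNReal.ofReal_mul (by linarith)]
      exact ENNReal.ofReal_le_ofReal (ha k hk hk1)
    rw [ENNReal.ofReal_toReal hK]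
    calc _ = ∑' k : zset N M, ENNReal.ofReal (a k) *
            (∑' n : ℕ, (zset N M).indicator (fun i => ENNReal.ofReal (b i)) (k + n)) ^ α :=
          tsum_congr fun k => by
            rw [tsum_zset_eq_tsum_indicator_add k.2 fun i => ENNReal.ofReal (b i)]
      _ ≤ _ := tsum_mul_rpow_tsum_indicator_add_le hα hr hA _
end

section
/- Let α > 0, {a_k} strongly increasing and {b_k} positive. Then sup_{N ≤ k ≤ M} a_k (Σ_{i=k}^{M} b_i)^α ≈ sup_{N ≤ k ≤ M} a_k b_k^α, and Σ_{k=N}^{M} a_k sup_{k ≤ i ≤ M} b_i^α ≈ Σ_{k=N}^{M} a_k b_k^α, with constants depending only on α and the increase ratio. -/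
open ENNReal

lemma zcast_le {k i : ℤ} (h : k ≤ i) : ((k : ℝ) : EReal) ≤ ((i : ℝ) : EReal) := by
  apply EReal.coe_le_coe_iff.mpr
  exact_mod_cast h

lemma mem_zset_int {M : EReal} {k i : ℤ} :
    i ∈ zset ((k : ℝ) : EReal) M ↔ k ≤ i ∧ ((i : ℝ) : EReal) ≤ M := by
  constructor
  · rintro ⟨h1, h2⟩
    have := EReal.coe_le_coe_iff.mp h1
    exact ⟨by exact_mod_cast this, h2⟩
  · rintro ⟨h1, h2⟩
    exact ⟨zcast_le h1, h2⟩

lemma zset_between {N M : EReal} {k i j : ℤ} (hk : k ∈ zset N M) (hj : j ∈ zset N M)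
    (h1 : k ≤ i) (h2 : i ≤ j) : i ∈ zset N M :=
  ⟨le_trans hk.1 (zcast_le h1), le_trans (zcast_le h2) hj.2⟩

lemma growth_aux {N M : EReal} {ρ : ℝ} (hρ0 : 0 < ρ) {a : ℤ → ℝ}
    (ha : ∀ k, 0 < a k)
    (hstep : ∀ k : ℤ, k ∈ zset N M → (k + 1) ∈ zset N M → ρ * a k ≤ a (k + 1)) :
    ∀ n : ℕ, ∀ k : ℤ, k ∈ zset N M → (k + n) ∈ zset N M → ρ ^ n * a k ≤ a (k + n) := by
  intro n
  induction n with
  | zero => intro k hk _; simp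
  | succ n ih =>
    intro k hk hk1
    have hkn : (k + n) ∈ zset N M := zset_between hk hk1 (by omega) (by push_cast; omega)
    have h1 : ρ ^ n * a k ≤ a (k + n) := ih k hk hkn
    have h2 : ρ * a (k + n) ≤ a (k + n + 1) := by
      apply hstep (k + n) hkn
      have he : (k : ℤ) + ((n : ℕ) + 1 : ℕ) = k + n + 1 := by push_cast; ring
      rwa [he] at hk1
    have : (k : ℤ) + (n + 1 : ℕ) = k + n + 1 := by push_cast; ring
    rw [this]
    calc ρ ^ (n + 1) * a k = ρ * (ρ ^ n * a k) := by ring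
    _ ≤ ρ * a (k + n) := by nlinarith
    _ ≤ a (k + n + 1) := h2

lemma growth {N M : EReal} {ρ : ℝ} (hρ0 : 0 < ρ) {a : ℤ → ℝ}
    (ha : ∀ k, 0 < a k)
    (hstep : ∀ k : ℤ, k ∈ zset N M → (k + 1) ∈ zset N M → ρ * a k ≤ a (k + 1))
    {k i : ℤ} (hk : k ∈ zset N M) (hi : i ∈ zset N M) (hki : k ≤ i) :
    ρ ^ ((i - k).toNat) * a k ≤ a i := by
  have hik : k + ((i - k).toNat : ℤ) = i := by omega
  have := growth_aux hρ0 ha hstep (i - k).toNat k hk (by rw [hik]; exact hi)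
  rwa [hik] at this

theorem sup_tail_sum_and_sum_tail_sup_of_strongly_increasing (α ρ : ℝ)
    (hα : 0 < α) (hρ : 1 < ρ) :
    ∃ c C : ℝ, 0 < c ∧ 0 < C ∧
      ∀ (N M : EReal), N < M → ∀ (a b : ℤ → ℝ),
        (∀ k, 0 < a k) → (∀ k, 0 < b k) →
        (∀ k : ℤ, k ∈ zset N M → (k + 1) ∈ zset N M → ρ * a k ≤ a (k + 1)) →
        (ENNReal.ofReal c *
              (⨆ k : zset N M, ENNReal.ofReal (a (k : ℤ)) * ENNReal.ofReal (b (k : ℤ)) ^ α) ≤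
            (⨆ k : zset N M, ENNReal.ofReal (a (k : ℤ)) *
                (∑' i : zset (((k : ℤ) : ℝ) : EReal) M, ENNReal.ofReal (b (i : ℤ))) ^ α) ∧
          (⨆ k : zset N M, ENNReal.ofReal (a (k : ℤ)) *
              (∑' i : zset (((k : ℤ) : ℝ) : EReal) M, ENNReal.ofReal (b (i : ℤ))) ^ α) ≤
            ENNReal.ofReal C *
              (⨆ k : zset N M, ENNReal.ofReal (a (k : ℤ)) * ENNReal.ofReal (b (k : ℤ)) ^ α)) ∧
        (ENNReal.ofReal c *
              (∑' k : zset N M, ENNReal.ofReal (a (k : ℤ)) * ENNReal.ofReal (b (k : ℤ)) ^ α) ≤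
            (∑' k : zset N M, ENNReal.ofReal (a (k : ℤ)) *
                ⨆ i : zset (((k : ℤ) : ℝ) : EReal) M, ENNReal.ofReal (b (i : ℤ)) ^ α) ∧
          (∑' k : zset N M, ENNReal.ofReal (a (k : ℤ)) *
              ⨆ i : zset (((k : ℤ) : ℝ) : EReal) M, ENNReal.ofReal (b (i : ℤ)) ^ α) ≤
            ENNReal.ofReal C *
              (∑' k : zset N M, ENNReal.ofReal (a (k : ℤ)) * ENNReal.ofReal (b (k : ℤ)) ^ α)) := by
  classical
  have hρ0 : (0 : ℝ) < ρ := by linarith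
  set r : ℝ := ρ ^ (-α⁻¹) with hr_def
  have hr0 : 0 < r := Real.rpow_pos_of_pos hρ0 _
  have hr1 : r < 1 := Real.rpow_lt_one_of_one_lt_of_neg hρ (neg_lt_zero.mpr (by positivity))
  have hρinv0 : (0 : ℝ) < ρ⁻¹ := by positivity
  have hρinv1 : ρ⁻¹ < 1 := by
    rw [inv_lt_one_iff₀]; right; exact hρ
  set C₁ : ℝ := ((1 - r)⁻¹) ^ α with hC₁_def
  set C₂ : ℝ := (1 - ρ⁻¹)⁻¹ with hC₂_def
  have hC₁ : 0 < C₁ := Real.rpow_pos_of_pos (inv_pos.mpr (by linarith)) _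
  have hC₂ : 0 < C₂ := inv_pos.mpr (by linarith)
  refine ⟨1, C₁ + C₂, one_pos, by positivity, ?_⟩
  intro N M hNM a b ha hb hstep
  set P := zset N M with hP_def
  set A : ℤ → ℝ≥0∞ := fun k => ENNReal.ofReal (a k) with hA_def
  set B : ℤ → ℝ≥0∞ := fun k => ENNReal.ofReal (b k) with hB_def
  have hA0 : ∀ k, A k ≠ 0 := fun k => by
    simp [hA_def, ENNReal.ofReal_eq_zero, not_le, ha k]
  have hAtop : ∀ k, A k ≠ ⊤ := fun k => ENNReal.ofReal_ne_top
  -- membership of tail sets within P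
  have htail_sub : ∀ k : ℤ, k ∈ P → ∀ i : ℤ, i ∈ zset ((k : ℝ) : EReal) M → i ∈ P := by
    intro k hk i hi
    rw [mem_zset_int] at hi
    exact ⟨le_trans hk.1 (zcast_le hi.1), hi.2⟩
  have hself_tail : ∀ k : ℤ, k ∈ P → k ∈ zset ((k : ℝ) : EReal) M := by
    intro k hk
    exact mem_zset_int.mpr ⟨le_refl _, hk.2⟩
  -- growth in ENNReal
  have hAgrow : ∀ k ∈ P, ∀ i ∈ P, k ≤ i →
      ENNReal.ofReal (ρ ^ ((i - k).toNat)) * A k ≤ A i := by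
    intro k hk i hi hki
    rw [hA_def, ← ENNReal.ofReal_mul (by positivity)]
    exact ENNReal.ofReal_le_ofReal (growth hρ0 ha hstep hk hi hki)
  -- the supremum and sum of the diagonal terms
  have part1 : ENNReal.ofReal 1 * (⨆ k : P, A (k:ℤ) * B (k:ℤ) ^ α) ≤
      ⨆ k : P, A (k:ℤ) * (∑' i : zset (((k:ℤ):ℝ):EReal) M, B (i:ℤ)) ^ α := by
    rw [ENNReal.ofReal_one, one_mul]
    refine iSup_mono ?_
    rintro ⟨k, hk⟩
    refine mul_le_mul_right (ENNReal.rpow_le_rpow ?_ hα.le) _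
    exact ENNReal.le_tsum (⟨k, hself_tail k hk⟩ : zset ((k:ℝ):EReal) M)
  have part3 : ENNReal.ofReal 1 * (∑' k : P, A (k:ℤ) * B (k:ℤ) ^ α) ≤
      ∑' k : P, A (k:ℤ) * ⨆ i : zset (((k:ℤ):ℝ):EReal) M, B (i:ℤ) ^ α := by
    rw [ENNReal.ofReal_one, one_mul]
    refine ENNReal.tsum_le_tsum ?_
    rintro ⟨k, hk⟩
    refine mul_le_mul_right ?_ _
    exact le_iSup (fun i : zset ((k:ℝ):EReal) M => B (i:ℤ) ^ α) ⟨k, hself_tail k hk⟩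
  have part2 : (⨆ k : P, A (k:ℤ) * (∑' i : zset (((k:ℤ):ℝ):EReal) M, B (i:ℤ)) ^ α) ≤
      ENNReal.ofReal (C₁ + C₂) * ⨆ k : P, A (k:ℤ) * B (k:ℤ) ^ α := by
    set S := ⨆ k : P, A (k:ℤ) * B (k:ℤ) ^ α with hS_def
    have hSb : ∀ i, ∀ hi : i ∈ P, A i * B i ^ α ≤ S := by
      intro i hi; exact le_iSup (fun k : P => A (k:ℤ) * B (k:ℤ) ^ α) ⟨i, hi⟩
    have hG : ((1 - ENNReal.ofReal r)⁻¹) ^ α = ENNReal.ofReal C₁ := by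
      rw [← ENNReal.ofReal_one, ← ENNReal.ofReal_sub _ hr0.le,
        ← ENNReal.ofReal_inv_of_pos (by linarith), ENNReal.ofReal_rpow_of_pos (by rw [inv_pos]; linarith)]
    refine iSup_le ?_
    rintro ⟨k, hk⟩
    have claim2 : ∀ i : zset ((k:ℝ):EReal) M,
        B (i:ℤ) ≤ S ^ α⁻¹ * (((A k)⁻¹) ^ α⁻¹ * (ENNReal.ofReal r) ^ ((i:ℤ) - k).toNat) := by
      rintro ⟨i, hi⟩
      have hiP : i ∈ P := htail_sub k hk i hi
      have hki : k ≤ i := (mem_zset_int.mp hi).1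
      set n := (i - k).toNat with hn_def
      set c : ℝ≥0∞ := ENNReal.ofReal (ρ ^ n) with hc_def
      have hc0 : c ≠ 0 := by
        rw [hc_def]; simp only [ne_eq, ENNReal.ofReal_eq_zero, not_le]; positivity
      have hctop : c ≠ ⊤ := ENNReal.ofReal_ne_top
      have h1 : B i ^ α * (c * A k) ≤ S := by
        calc B i ^ α * (c * A k) ≤ B i ^ α * A i :=
              mul_le_mul_right (hAgrow k hk i hiP hki) _
        _ = A i * B i ^ α := mul_comm _ _
        _ ≤ S := hSb i hiP
      have hd0 : c * A k ≠ 0 := by simp [hc0, hA0 k]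
      have hdtop : c * A k ≠ ⊤ := ENNReal.mul_ne_top hctop (hAtop k)
      have h2 : B i ^ α ≤ S / (c * A k) :=
        (ENNReal.le_div_iff_mul_le (Or.inl hd0) (Or.inl hdtop)).mpr h1
      have h3 : B i ≤ (S / (c * A k)) ^ α⁻¹ := by
        have h4 := ENNReal.rpow_le_rpow h2 (by positivity : (0:ℝ) ≤ α⁻¹)
        rwa [← ENNReal.rpow_mul, mul_inv_cancel₀ hα.ne', ENNReal.rpow_one] at h4
      refine h3.trans (le_of_eq ?_)
      rw [div_eq_mul_inv, ENNReal.mul_inv (Or.inl hc0) (Or.inl hctop),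
        ENNReal.mul_rpow_of_nonneg _ _ (by positivity),
        ENNReal.mul_rpow_of_nonneg _ _ (by positivity)]
      congr 1
      rw [mul_comm]
      congr 1
      have hreal : ((ρ ^ n)⁻¹ : ℝ) ^ α⁻¹ = r ^ n := by
        rw [hr_def, ← Real.rpow_natCast ρ n, ← Real.rpow_neg hρ0.le, ← Real.rpow_mul hρ0.le,
          ← Real.rpow_natCast (ρ ^ (-α⁻¹)) n, ← Real.rpow_mul hρ0.le]
        congr 1
        ring
      rw [hc_def, ← ENNReal.ofReal_inv_of_pos (by positivity),
        ENNReal.ofReal_rpow_of_pos (by positivity), hreal, ENNReal.ofReal_pow hr0.le]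
    have hsum : (∑' i : zset ((k:ℝ):EReal) M, B (i:ℤ)) ≤
        S ^ α⁻¹ * (((A k)⁻¹) ^ α⁻¹ * (1 - ENNReal.ofReal r)⁻¹) := by
      calc (∑' i : zset ((k:ℝ):EReal) M, B (i:ℤ))
          ≤ ∑' i : zset ((k:ℝ):EReal) M,
              S ^ α⁻¹ * (((A k)⁻¹) ^ α⁻¹ * (ENNReal.ofReal r) ^ ((i:ℤ) - k).toNat) :=
            ENNReal.tsum_le_tsum claim2
      _ = S ^ α⁻¹ * (((A k)⁻¹) ^ α⁻¹ *
            ∑' i : zset ((k:ℝ):EReal) M, (ENNReal.ofReal r) ^ ((i:ℤ) - k).toNat) := by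
            rw [ENNReal.tsum_mul_left, ENNReal.tsum_mul_left]
      _ ≤ _ := by
            refine mul_le_mul_right (mul_le_mul_right ?_ _) _
            calc (∑' i : zset ((k:ℝ):EReal) M, (ENNReal.ofReal r) ^ ((i:ℤ) - k).toNat)
                ≤ ∑' m : ℕ, (ENNReal.ofReal r) ^ m := by
                  refine tsum_comp_le_tsum_of_injective ?_ (fun m => (ENNReal.ofReal r) ^ m)
                  rintro ⟨i, hi⟩ ⟨j, hj⟩ hij
                  have hki : k ≤ i := (mem_zset_int.mp hi).1
                  have hkj : k ≤ j := (mem_zset_int.mp hj).1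
                  have hij' : (i - k).toNat = (j - k).toNat := hij
                  exact Subtype.ext (show i = j by omega)
            _ = (1 - ENNReal.ofReal r)⁻¹ := ENNReal.tsum_geometric _
    calc A k * (∑' i : zset ((k:ℝ):EReal) M, B (i:ℤ)) ^ α
        ≤ A k * (S ^ α⁻¹ * (((A k)⁻¹) ^ α⁻¹ * (1 - ENNReal.ofReal r)⁻¹)) ^ α :=
          mul_le_mul_right (ENNReal.rpow_le_rpow hsum hα.le) _
    _ = A k * (S * ((A k)⁻¹ * ((1 - ENNReal.ofReal r)⁻¹) ^ α)) := by
          rw [ENNReal.mul_rpow_of_nonneg _ _ hα.le, ENNReal.mul_rpow_of_nonneg _ _ hα.le,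
            ← ENNReal.rpow_mul, ← ENNReal.rpow_mul, inv_mul_cancel₀ hα.ne',
            ENNReal.rpow_one, ENNReal.rpow_one]
    _ = S * ((1 - ENNReal.ofReal r)⁻¹) ^ α * (A k * (A k)⁻¹) := by ring
    _ = S * ENNReal.ofReal C₁ := by
          rw [ENNReal.mul_inv_cancel (hA0 k) (hAtop k), mul_one, hG]
    _ ≤ ENNReal.ofReal (C₁ + C₂) * S := by
          rw [mul_comm]
          exact mul_le_mul_left (ENNReal.ofReal_le_ofReal (by linarith)) _
  have part4 : (∑' k : P, A (k:ℤ) * ⨆ i : zset (((k:ℤ):ℝ):EReal) M, B (i:ℤ) ^ α) ≤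
      ENNReal.ofReal (C₁ + C₂) * ∑' k : P, A (k:ℤ) * B (k:ℤ) ^ α := by
    set q : ℝ≥0∞ := ENNReal.ofReal ρ⁻¹ with hq_def
    have hgeoq : (1 - q)⁻¹ = ENNReal.ofReal C₂ := by
      rw [hq_def, ← ENNReal.ofReal_one, ← ENNReal.ofReal_sub _ hρinv0.le,
        ← ENNReal.ofReal_inv_of_pos (by linarith)]
    have hAq : ∀ k, ∀ hk : k ∈ P, ∀ i, ∀ hi : i ∈ P, k ≤ i →
        A k ≤ q ^ ((i - k).toNat) * A i := by
      intro k hk i hi hki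
      have h := hAgrow k hk i hi hki
      set n := (i - k).toNat with hn_def
      have hcn0 : ENNReal.ofReal (ρ ^ n) ≠ 0 := by
        simp only [ne_eq, ENNReal.ofReal_eq_zero, not_le]; positivity
      have heq : A k = (ENNReal.ofReal (ρ ^ n))⁻¹ * (ENNReal.ofReal (ρ ^ n) * A k) := by
        rw [← mul_assoc, ENNReal.inv_mul_cancel hcn0 ENNReal.ofReal_ne_top, one_mul]
      rw [heq]
      refine le_trans (mul_le_mul_right h _) (le_of_eq ?_)
      congr 1
      rw [hq_def, ← ENNReal.ofReal_pow hρinv0.le, inv_pow,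
        ENNReal.ofReal_inv_of_pos (by positivity)]
    set F : ℤ → ℝ≥0∞ := fun i => A i * B i ^ α with hF_def
    set f : ℤ → ℤ → ℝ≥0∞ :=
      fun k i => if k ∈ P ∧ i ∈ P ∧ k ≤ i then q ^ ((i - k).toNat) * F i else 0 with hf_def
    have step1 : (∑' k : P, A (k:ℤ) * ⨆ i : zset (((k:ℤ):ℝ):EReal) M, B (i:ℤ) ^ α) ≤
        ∑' k : P, ∑' i : ℤ, f (k:ℤ) i := by
      refine ENNReal.tsum_le_tsum ?_
      rintro ⟨k, hk⟩
      have h1 : (⨆ i : zset ((k:ℝ):EReal) M, B (i:ℤ) ^ α) ≤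
          ∑' i : zset ((k:ℝ):EReal) M, B (i:ℤ) ^ α :=
        iSup_le fun i => ENNReal.le_tsum i
      calc A k * (⨆ i : zset ((k:ℝ):EReal) M, B (i:ℤ) ^ α)
          ≤ ∑' i : zset ((k:ℝ):EReal) M, A k * B (i:ℤ) ^ α := by
            rw [ENNReal.tsum_mul_left]; exact mul_le_mul_right h1 _
      _ ≤ ∑' i : zset ((k:ℝ):EReal) M, f k (i:ℤ) := by
            refine ENNReal.tsum_le_tsum ?_
            rintro ⟨i, hi⟩
            have hiP : i ∈ P := htail_sub k hk i hi
            have hki : k ≤ i := (mem_zset_int.mp hi).1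
            have hfk : f k i = q ^ ((i - k).toNat) * F i := by
              rw [hf_def]; simp only [if_pos (⟨hk, hiP, hki⟩ : k ∈ P ∧ i ∈ P ∧ k ≤ i)]
            rw [hfk, hF_def]
            calc A k * B i ^ α ≤ (q ^ ((i-k).toNat) * A i) * B i ^ α :=
                  mul_le_mul_left (hAq k hk i hiP hki) _
            _ = q ^ ((i-k).toNat) * (A i * B i ^ α) := by ring
      _ = ∑' i : ℤ, (zset ((k:ℝ):EReal) M).indicator (f k) i := tsum_subtype _ _
      _ = ∑' i : ℤ, f k i := by
            refine tsum_congr fun i => ?_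
            by_cases hi : i ∈ zset ((k:ℝ):EReal) M
            · rw [Set.indicator_of_mem hi]
            · rw [Set.indicator_of_notMem hi, hf_def]
              simp only
              rw [if_neg]
              rintro ⟨-, hiP, hki⟩
              exact hi (mem_zset_int.mpr ⟨hki, hiP.2⟩)
    have step2 : (∑' k : P, ∑' i : ℤ, f (k:ℤ) i) = ∑' i : ℤ, ∑' k : ℤ, f k i := by
      have h : ∀ k : ℤ, P.indicator (fun k => ∑' i : ℤ, f k i) k = ∑' i : ℤ, f k i := by
        intro k
        by_cases hk : k ∈ P
        · rw [Set.indicator_of_mem hk]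
        · rw [Set.indicator_of_notMem hk]
          symm
          have hz : ∀ i : ℤ, f k i = 0 := by
            intro i; rw [hf_def]; simp only; rw [if_neg]
            rintro ⟨hkP, -⟩; exact hk hkP
          simp [hz]
      rw [tsum_subtype P (fun k => ∑' i : ℤ, f k i), tsum_congr h, ENNReal.tsum_comm]
    have step3 : ∀ i : ℤ, (∑' k : ℤ, f k i) ≤ P.indicator F i * (1 - q)⁻¹ := by
      intro i
      have hpt : ∀ k : ℤ, f k i = P.indicator F i *
          ({k : ℤ | k ∈ P ∧ i ∈ P ∧ k ≤ i}.indicator (fun k => q ^ ((i - k).toNat)) k) := by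
        intro k
        rw [hf_def]; simp only
        by_cases h : k ∈ P ∧ i ∈ P ∧ k ≤ i
        · have hmem : k ∈ {k : ℤ | k ∈ P ∧ i ∈ P ∧ k ≤ i} := h
          rw [if_pos h, Set.indicator_of_mem hmem, Set.indicator_of_mem h.2.1, mul_comm]
        · have hmem : k ∉ {k : ℤ | k ∈ P ∧ i ∈ P ∧ k ≤ i} := h
          rw [if_neg h, Set.indicator_of_notMem hmem, mul_zero]
      calc (∑' k : ℤ, f k i) = P.indicator F i *
            ∑' k : ℤ, ({k : ℤ | k ∈ P ∧ i ∈ P ∧ k ≤ i}.indicator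
              (fun k => q ^ ((i - k).toNat)) k) := by
            rw [tsum_congr hpt, ENNReal.tsum_mul_left]
      _ ≤ P.indicator F i * (1 - q)⁻¹ := by
            refine mul_le_mul_right ?_ _
            rw [← tsum_subtype]
            calc (∑' k : {k : ℤ | k ∈ P ∧ i ∈ P ∧ k ≤ i}, q ^ ((i - (k:ℤ)).toNat))
                ≤ ∑' m : ℕ, q ^ m := by
                  refine tsum_comp_le_tsum_of_injective ?_ (fun m => q ^ m)
                  rintro ⟨k₁, hk₁⟩ ⟨k₂, hk₂⟩ h
                  have h' : (i - k₁).toNat = (i - k₂).toNat := h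
                  have h1 : k₁ ≤ i := hk₁.2.2
                  have h2 : k₂ ≤ i := hk₂.2.2
                  exact Subtype.ext (show k₁ = k₂ by omega)
            _ = (1 - q)⁻¹ := ENNReal.tsum_geometric _
    calc (∑' k : P, A (k:ℤ) * ⨆ i : zset (((k:ℤ):ℝ):EReal) M, B (i:ℤ) ^ α)
        ≤ ∑' i : ℤ, ∑' k : ℤ, f k i := step1.trans (le_of_eq step2)
    _ ≤ ∑' i : ℤ, P.indicator F i * (1 - q)⁻¹ := ENNReal.tsum_le_tsum step3
    _ = (1 - q)⁻¹ * ∑' i : ℤ, P.indicator F i := by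
          rw [← ENNReal.tsum_mul_left]; exact tsum_congr fun i => mul_comm _ _
    _ = (1 - q)⁻¹ * ∑' i : P, F (i:ℤ) := by rw [tsum_subtype]
    _ = ENNReal.ofReal C₂ * ∑' i : P, A (i:ℤ) * B (i:ℤ) ^ α := by rw [hgeoq, hF_def]
    _ ≤ ENNReal.ofReal (C₁ + C₂) * ∑' i : P, A (i:ℤ) * B (i:ℤ) ^ α :=
          mul_le_mul_left (ENNReal.ofReal_le_ofReal (by linarith)) _
  exact ⟨⟨part1, part2⟩, part3, part4⟩
end

section
/- Let β ≥ 0, let {a_k} be a strongly increasing positive sequence, {b_k} a positive sequence, and let {d_{k,i}} be a regular kernel: nonnegative, non-increasing in k, non-decreasing in i, and satisfying d_{k,i} ≲ d_{k,j} + d_{j,i} for all k ≤ j ≤ i. Then sup_k a_k (Σ_{i=k}^{M} d_{k,i+1} b_i)^β ≈ sup_k a_k d_{k,k+1}^β (Σ_{i=k}^{M} b_i)^β, with constants depending only on β, the increase ratio, and the kernel constant. -/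
/-!
Fix `k`, let `A` be the supremum on the right, `B_j = ∑_{i ≥ j} b_i` and `T = (A / a_k)^{1/β}`.
Strong increase gives `a_{k+m} ≥ ρ^m a_k`, so `a_{k+m} d_{k+m,k+m+1}^β B_{k+m}^β ≤ A` turns into
`d_{k+m,k+m+1} B_{k+m} ≤ T s^{2m}` with `s = ρ^{-1/(2β)} < 1`. The Gogatishvili–Stepanov chaining
inequality `d_{k,i+1} ≲ (∑_{j=k}^{i} d_{j,j+1}^α)^{1/α}`, proved by bisecting the sum, then gives
`d_{k,i+1} ≲ T G_i` with `G_i = ∑_{j=k}^{i} s^{j-k} / B_j`: one factor `s^{j-k}` pays for the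
`ℓ^α`-sum, the other is kept in `G_i`. Exchanging the order of summation,
`∑_i G_i b_i ≤ ∑_j s^{j-k} ≤ (1 - s)⁻¹`, hence `a_k (∑_i d_{k,i+1} b_i)^β ≲ a_k T^β = A`.
The reverse inequality only needs `d_{k,k+1} ≤ d_{k,i+1}`.
-/

open ENNReal

open Finset

lemma exists_le_half_sum_range_and_tail (e : ℕ → ℝ) (he : ∀ m, 0 ≤ e m) (n : ℕ) :
    ∃ j ≤ n, ∑ m ∈ range j, e m ≤ (∑ m ∈ range (n + 1), e m) / 2 ∧
      ∑ m ∈ range (n - j), e (j + 1 + m) ≤ (∑ m ∈ range (n + 1), e m) / 2 := by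
  classical
  set S := ∑ m ∈ range (n + 1), e m
  let P := fun j => ∑ m ∈ range j, e m ≤ S / 2
  have hS : 0 ≤ S := sum_nonneg fun m _ => he m
  have hP0 : P 0 := by simp only [P, sum_range_zero]; positivity
  set j := Nat.findGreatest P n
  have hjn : j ≤ n := Nat.findGreatest_le n
  refine ⟨j, hjn, Nat.findGreatest_spec (Nat.zero_le n) hP0, ?_⟩
  have hsplit : S = ∑ m ∈ range (j + 1), e m + ∑ m ∈ range (n - j), e (j + 1 + m) := by
    rw [← sum_range_add, show j + 1 + (n - j) = n + 1 by omega]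
  rcases hjn.eq_or_lt with hjn | hjn
  · simp only [hjn, Nat.sub_self, sum_range_zero]; positivity
  · have : ¬ P (j + 1) := Nat.findGreatest_is_greatest (Nat.lt_succ_self j) hjn
    simp only [P, not_le] at this
    linarith

theorem le_two_mul_sq_mul_sum_rpow {c α : ℝ} (hc : 1 ≤ c) (hα : 0 < α)
    (hcα : 4 * c ^ 2 ≤ 2 ^ α⁻¹) (n : ℕ) (d : ℕ → ℕ → ℝ) (hd : ∀ m n, 0 ≤ d m n)
    (htri : ∀ k j i, k ≤ j → j ≤ i → d k i ≤ c * (d k j + d j i)) :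
    d 0 (n + 1) ≤ 2 * c ^ 2 * (∑ m ∈ range (n + 1), d m (m + 1) ^ α) ^ α⁻¹ := by
  induction n using Nat.strong_induction_on generalizing d with
  | _ n ih =>
  set S := ∑ m ∈ range (n + 1), d m (m + 1) ^ α
  obtain ⟨j, hjn, hleft, hright⟩ :=
    exists_le_half_sum_range_and_tail (fun m => d m (m + 1) ^ α)
      (fun m => Real.rpow_nonneg (hd _ _) _) n
  have hS : 0 ≤ S := sum_nonneg fun m _ => Real.rpow_nonneg (hd _ _) _
  set u := S ^ α⁻¹
  set v := (S / 2) ^ α⁻¹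
  have hu : 0 ≤ u := by positivity
  have hv : 0 ≤ v := by positivity
  have huv : 4 * c ^ 2 * v ≤ u := calc
    4 * c ^ 2 * v ≤ 2 ^ α⁻¹ * v := by gcongr
    _ = u := by rw [← Real.mul_rpow (by norm_num) (by positivity), mul_div_cancel₀ _ two_ne_zero]
  have hhalf : ∀ x, 0 ≤ x → x ≤ S / 2 → 2 * c ^ 2 * x ^ α⁻¹ ≤ 2 * c ^ 2 * v :=
    fun x hx h => by gcongr; exact Real.rpow_le_rpow hx h (by positivity)
  have hstep : ∀ m ≤ n, d m (m + 1) ≤ u := by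
    intro m hm
    calc d m (m + 1) = (d m (m + 1) ^ α) ^ α⁻¹ := by
          rw [← Real.rpow_mul (hd _ _), mul_inv_cancel₀ hα.ne', Real.rpow_one]
      _ ≤ u := Real.rpow_le_rpow (Real.rpow_nonneg (hd _ _) _)
          (single_le_sum (f := fun m => d m (m + 1) ^ α)
            (fun m _ => Real.rpow_nonneg (hd _ _) _) (mem_range.2 (by omega))) (by positivity)
  -- Chain `0 → j → j + 1 → n + 1` through the bisection point: both outer links cost `2c²v` by
  -- induction, the middle one at most `u`, and `4c²v ≤ u` absorbs the constants.
  have hfirst : d 0 (j + 1) ≤ c * (2 * c ^ 2 * v + u) := by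
    rcases j with _ | j
    · calc d 0 (0 + 1) ≤ u := hstep 0 (Nat.zero_le n)
        _ ≤ c * u := le_mul_of_one_le_left hu hc
        _ ≤ c * (2 * c ^ 2 * v + u) := by gcongr; exact le_add_of_nonneg_left (by positivity)
    · calc d 0 (j + 2) ≤ c * (d 0 (j + 1) + d (j + 1) (j + 2)) := htri _ _ _ (by omega) (by omega)
        _ ≤ c * (2 * c ^ 2 * v + u) := by
          gcongr
          · exact (ih j (by omega) d hd htri).trans
              (hhalf _ (sum_nonneg fun m _ => Real.rpow_nonneg (hd _ _) _) hleft)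
          · exact hstep _ hjn
  have hsecond : d 0 (n + 1) ≤ c * (d 0 (j + 1) + 2 * c ^ 2 * v) := by
    rcases hjn.eq_or_lt with rfl | hjn
    · calc d 0 (j + 1) ≤ c * d 0 (j + 1) := le_mul_of_one_le_left (hd _ _) hc
        _ ≤ c * (d 0 (j + 1) + 2 * c ^ 2 * v) := by
          gcongr; exact le_add_of_nonneg_right (by positivity)
    · have hshift := ih (n - j - 1) (by omega) (fun p q => d (j + 1 + p) (j + 1 + q))
        (fun _ _ => hd _ _) (fun _ _ _ h₁ h₂ => htri _ _ _ (by omega) (by omega))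
      rw [show n - j - 1 + 1 = n - j by omega, add_zero,
        show j + 1 + (n - j) = n + 1 by omega] at hshift
      calc d 0 (n + 1) ≤ c * (d 0 (j + 1) + d (j + 1) (n + 1)) := htri _ _ _ (by omega) (by omega)
        _ ≤ c * (d 0 (j + 1) + 2 * c ^ 2 * v) := by
          gcongr
          exact hshift.trans (hhalf _ (sum_nonneg fun m _ => Real.rpow_nonneg (hd _ _) _) hright)
  have hcu : c * u ≤ c ^ 2 * u := mul_le_mul_of_nonneg_right (by nlinarith) hu
  calc d 0 (n + 1) ≤ c * (c * (2 * c ^ 2 * v + u) + 2 * c ^ 2 * v) := by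
        refine hsecond.trans ?_; gcongr
    _ = c ^ 2 * u + c ^ 2 / 2 * (4 * c ^ 2 * v) + c / 2 * (4 * c ^ 2 * v) := by ring
    _ ≤ c ^ 2 * u + c ^ 2 / 2 * u + c / 2 * u := by gcongr
    _ ≤ 2 * c ^ 2 * u := by linarith

theorem exists_kernel_le_mul_sum_rpow (c : ℝ) :
    ∃ K α : ℝ, 0 < K ∧ 0 < α ∧ ∀ d : ℕ → ℕ → ℝ, (∀ m n, 0 ≤ d m n) →
      (∀ k j i, k ≤ j → j ≤ i → d k i ≤ c * (d k j + d j i)) →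
      ∀ n, d 0 (n + 1) ≤ K * (∑ m ∈ range (n + 1), d m (m + 1) ^ α) ^ α⁻¹ := by
  set c' := max c 1
  have hc' : 1 ≤ c' := le_max_right _ _
  have hlog : 0 < Real.logb 2 (4 * c' ^ 2) := Real.logb_pos one_lt_two (by nlinarith)
  refine ⟨2 * c' ^ 2, (Real.logb 2 (4 * c' ^ 2))⁻¹, by positivity, inv_pos.2 hlog,
    fun d hd htri n => le_two_mul_sq_mul_sum_rpow hc' (inv_pos.2 hlog) ?_ n d hd ?_⟩
  · rw [inv_inv, Real.rpow_logb two_pos (by norm_num) (by positivity)]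
  · intro k j i h₁ h₂
    exact (htri k j i h₁ h₂).trans
      (mul_le_mul_of_nonneg_right (le_max_left _ _) (add_nonneg (hd _ _) (hd _ _)))

lemma ofReal_le_ofReal_mul_sum_rpow {x K α : ℝ} {e : ℕ → ℝ} {s : Finset ℕ} (hK : 0 ≤ K)
    (he : ∀ m, 0 ≤ e m) (hα : 0 < α) (h : x ≤ K * (∑ m ∈ s, e m ^ α) ^ α⁻¹) :
    ENNReal.ofReal x ≤ ENNReal.ofReal K * (∑ m ∈ s, ENNReal.ofReal (e m) ^ α) ^ α⁻¹ := by
  have hsum : 0 ≤ ∑ m ∈ s, e m ^ α := sum_nonneg fun m _ => Real.rpow_nonneg (he m) α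
  refine (ENNReal.ofReal_le_ofReal h).trans_eq ?_
  rw [ENNReal.ofReal_mul hK, ← ENNReal.ofReal_rpow_of_nonneg hsum (by positivity),
    ENNReal.ofReal_sum_of_nonneg fun m _ => Real.rpow_nonneg (he m) α]
  simp_rw [ENNReal.ofReal_rpow_of_nonneg (he _) hα.le]

lemma ENNReal.tsum_sum_antidiagonal (f : ℕ × ℕ → ℝ≥0∞) :
    ∑' n, ∑ p ∈ antidiagonal n, f p = ∑' p, f p := by
  rw [← HasAntidiagonal.sigmaAntidiagonalEquivProd.tsum_eq, ENNReal.tsum_sigma']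
  exact tsum_congr fun n => (Finset.tsum_subtype _ f).symm

lemma sum_range_rpow_rpow_inv_le_mul {x : ℕ → ℝ≥0∞} {y s : ℝ≥0∞} {α : ℝ} (hα : 0 < α) {N : ℕ}
    (hx : ∀ m ∈ range N, x m ≤ y * s ^ m) :
    (∑ m ∈ range N, x m ^ α) ^ α⁻¹ ≤ y * ((1 - s ^ α)⁻¹) ^ α⁻¹ := calc
  (∑ m ∈ range N, x m ^ α) ^ α⁻¹ ≤ (∑ m ∈ range N, y ^ α * (s ^ α) ^ m) ^ α⁻¹ := by
    gcongr with m hm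
    calc x m ^ α ≤ (y * s ^ m) ^ α := rpow_le_rpow (hx m hm) hα.le
      _ = y ^ α * (s ^ α) ^ m := by
        rw [mul_rpow_of_nonneg _ _ hα.le, ← rpow_natCast_mul, mul_comm (m : ℝ), rpow_mul_natCast]
  _ ≤ (y ^ α * (1 - s ^ α)⁻¹) ^ α⁻¹ := by
    rw [← mul_sum, ← tsum_geometric]
    gcongr
    exact ENNReal.sum_le_tsum _
  _ = y * ((1 - s ^ α)⁻¹) ^ α⁻¹ := by
    rw [mul_rpow_of_nonneg _ _ (inv_nonneg.2 hα.le), rpow_rpow_inv hα.ne']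

lemma tsum_sum_range_div_tail_mul_le (b : ℕ → ℝ≥0∞) (s : ℝ≥0∞) :
    ∑' n, (∑ m ∈ range (n + 1), s ^ m / ∑' i, b (m + i)) * b n ≤ (1 - s)⁻¹ := calc
  ∑' n, (∑ m ∈ range (n + 1), s ^ m / ∑' i, b (m + i)) * b n
      = ∑' n, ∑ p ∈ antidiagonal n, (s ^ p.1 / ∑' i, b (p.1 + i)) * b (p.1 + p.2) := by
    refine tsum_congr fun n => ?_
    rw [Nat.sum_antidiagonal_eq_sum_range_succ_mk, sum_mul]
    refine sum_congr rfl fun m hm => ?_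
    rw [Nat.add_sub_cancel' (Nat.lt_succ_iff.1 (mem_range.1 hm))]
  _ = ∑' m, ∑' i, (s ^ m / ∑' i, b (m + i)) * b (m + i) :=
    (ENNReal.tsum_sum_antidiagonal _).trans
      (ENNReal.tsum_prod (f := fun m i => (s ^ m / ∑' i, b (m + i)) * b (m + i)))
  _ = ∑' m, (s ^ m / ∑' i, b (m + i)) * ∑' i, b (m + i) :=
    tsum_congr fun m => ENNReal.tsum_mul_left
  _ ≤ ∑' m, s ^ m := ENNReal.tsum_le_tsum fun m => by rw [mul_comm]; exact ENNReal.mul_div_le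
  _ = (1 - s)⁻¹ := tsum_geometric s

lemma le_mul_sum_range_div_tail {d : ℕ → ℕ → ℝ≥0∞} {b : ℕ → ℝ≥0∞} {K T s : ℝ≥0∞} {α : ℝ}
    (hα : 0 < α) (hT : T ≠ ⊤) (hs : s ≠ ⊤)
    (hchain : ∀ n, d 0 (n + 1) ≤ K * (∑ m ∈ range (n + 1), d m (m + 1) ^ α) ^ α⁻¹)
    (hdiag : ∀ m, d m (m + 1) * ∑' i, b (m + i) ≤ T * s ^ (2 * m)) {n : ℕ} (hn : b n ≠ 0) :
    d 0 (n + 1) ≤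
      K * ((1 - s ^ α)⁻¹) ^ α⁻¹ * (T * ∑ m ∈ range (n + 1), s ^ m / ∑' i, b (m + i)) := by
  set G := ∑ m ∈ range (n + 1), s ^ m / ∑' i, b (m + i)
  have hstep : ∀ m ∈ range (n + 1), d m (m + 1) ≤ T * G * s ^ m := by
    intro m hm
    have hmn : m ≤ n := Nat.lt_succ_iff.1 (mem_range.1 hm)
    have htail : ∑' i, b (m + i) ≠ 0 := by
      refine ne_bot_of_le_ne_bot hn ?_
      simpa [Nat.add_sub_cancel' hmn] using ENNReal.le_tsum (f := fun i => b (m + i)) (n - m)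
    calc d m (m + 1) ≤ T * s ^ (2 * m) / ∑' i, b (m + i) :=
          (ENNReal.le_div_iff_mul_le (Or.inl htail) (Or.inr (by finiteness))).2 (hdiag m)
      _ = T * s ^ m * (s ^ m / ∑' i, b (m + i)) := by
          rw [two_mul, pow_add, ← mul_assoc, mul_div_assoc]
      _ ≤ T * s ^ m * G := by
          gcongr
          exact single_le_sum (f := fun m => s ^ m / ∑' i, b (m + i)) (fun _ _ => zero_le) hm
      _ = T * G * s ^ m := by ring
  calc d 0 (n + 1) ≤ K * (∑ m ∈ range (n + 1), d m (m + 1) ^ α) ^ α⁻¹ := hchain n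
    _ ≤ K * (T * G * ((1 - s ^ α)⁻¹) ^ α⁻¹) := by
      gcongr; exact sum_range_rpow_rpow_inv_le_mul hα hstep
    _ = _ := by ring

theorem tsum_kernel_mul_le {d : ℕ → ℕ → ℝ≥0∞} {b : ℕ → ℝ≥0∞} {K T s : ℝ≥0∞} {α : ℝ}
    (hα : 0 < α) (hT : T ≠ ⊤) (hs : s ≠ ⊤)
    (hchain : ∀ n, d 0 (n + 1) ≤ K * (∑ m ∈ range (n + 1), d m (m + 1) ^ α) ^ α⁻¹)
    (hdiag : ∀ m, d m (m + 1) * ∑' i, b (m + i) ≤ T * s ^ (2 * m)) :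
    ∑' n, d 0 (n + 1) * b n ≤ K * ((1 - s ^ α)⁻¹) ^ α⁻¹ * (1 - s)⁻¹ * T := calc
  ∑' n, d 0 (n + 1) * b n
      ≤ ∑' n, K * ((1 - s ^ α)⁻¹) ^ α⁻¹ * T *
          ((∑ m ∈ range (n + 1), s ^ m / ∑' i, b (m + i)) * b n) := by
    refine ENNReal.tsum_le_tsum fun n => ?_
    rcases eq_or_ne (b n) 0 with hn | hn
    · simp [hn]
    · calc d 0 (n + 1) * b n ≤ _ * b n :=
            mul_le_mul_left (le_mul_sum_range_div_tail hα hT hs hchain hdiag hn) _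
        _ = _ := by ring
  _ ≤ K * ((1 - s ^ α)⁻¹) ^ α⁻¹ * T * (1 - s)⁻¹ := by
    rw [ENNReal.tsum_mul_left]; gcongr; exact tsum_sum_range_div_tail_mul_le b s
  _ = _ := by ring

lemma intCast_ereal_le_intCast {i j : ℤ} : ((i : ℝ) : EReal) ≤ ((j : ℝ) : EReal) ↔ i ≤ j := by
  simp

lemma mem_zset_intCast {j i : ℤ} {M : EReal} :
    i ∈ zset ((j : ℝ) : EReal) M ↔ j ≤ i ∧ ((i : ℝ) : EReal) ≤ M := by
  simp [zset]

lemma mem_zset_of_le_of_le {N M : EReal} {j k i : ℤ} (hj : j ∈ zset N M) (hi : i ∈ zset N M)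
    (hjk : j ≤ k) (hki : k ≤ i) : k ∈ zset N M :=
  ⟨hj.1.trans (intCast_ereal_le_intCast.2 hjk), (intCast_ereal_le_intCast.2 hki).trans hi.2⟩

lemma tsum_zset_eq_tsum_nat (f : ℤ → ℝ≥0∞) (j : ℤ) (M : EReal) :
    ∑' i : zset ((j : ℝ) : EReal) M, f i =
      ∑' n : ℕ, if (((j + n : ℤ) : ℝ) : EReal) ≤ M then f (j + n) else 0 := by
  rw [_root_.tsum_subtype, ← ((add_right_injective j).comp Nat.cast_injective).tsum_eq]
  · refine tsum_congr fun n => ?_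
    simp [Set.indicator, mem_zset_intCast]
  · intro i hi
    have := (mem_zset_intCast.1 (Set.mem_of_indicator_ne_zero hi)).1
    exact ⟨(i - j).toNat, by simp; omega⟩

theorem tsum_zset_kernel_mul_le {d : ℤ → ℤ → ℝ≥0∞} {b : ℤ → ℝ≥0∞} {K T s : ℝ≥0∞} {α : ℝ}
    (hα : 0 < α) (hT : T ≠ ⊤) (hs : s ≠ ⊤) (k : ℤ) (M : EReal)
    (hchain : ∀ n : ℕ, d k (k + (n + 1 : ℕ)) ≤
      K * (∑ m ∈ range (n + 1), d (k + m) (k + (m + 1 : ℕ)) ^ α) ^ α⁻¹)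
    (hdiag : ∀ m : ℕ, (((k + m : ℤ) : ℝ) : EReal) ≤ M →
      d (k + m) (k + m + 1) * ∑' i : zset (((k + m : ℤ) : ℝ) : EReal) M, b i ≤ T * s ^ (2 * m)) :
    ∑' i : zset ((k : ℝ) : EReal) M, d k (i + 1) * b i ≤
      K * ((1 - s ^ α)⁻¹) ^ α⁻¹ * (1 - s)⁻¹ * T := by
  -- With `b` truncated beyond `M`, tails starting past `M` vanish and the diagonal bound is free.
  set b' : ℕ → ℝ≥0∞ := fun n => if (((k + n : ℤ) : ℝ) : EReal) ≤ M then b (k + n) else 0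
  have htail : ∀ m : ℕ, ∑' i, b' (m + i) = ∑' i : zset (((k + m : ℤ) : ℝ) : EReal) M, b i := by
    intro m
    rw [tsum_zset_eq_tsum_nat]
    refine tsum_congr fun i => ?_
    simp only [b', Nat.cast_add, add_assoc]
  rw [tsum_zset_eq_tsum_nat (fun i => d k (i + 1) * b i)]
  convert tsum_kernel_mul_le (d := fun m n => d (k + m) (k + n)) (b := b') hα hT hs
    (by simpa using hchain) (fun m => ?_) using 2 with n
  · simp only [b', mul_ite, mul_zero, Nat.cast_add, Nat.cast_one, add_assoc, Nat.cast_zero,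
      add_zero]
  · rw [htail]
    by_cases hm : (((k + m : ℤ) : ℝ) : EReal) ≤ M
    · simpa [add_assoc] using hdiag m hm
    · have : IsEmpty (zset (((k + m : ℤ) : ℝ) : EReal) M) :=
        ⟨fun i => hm ((intCast_ereal_le_intCast.2 (mem_zset_intCast.1 i.2).1).trans
          (mem_zset_intCast.1 i.2).2)⟩
      simp

lemma pow_mul_le_of_strongly_increasing {N M : EReal} {a : ℤ → ℝ} {ρ : ℝ} (hρ : 0 ≤ ρ)
    (hinc : ∀ k : ℤ, k ∈ zset N M → (k + 1) ∈ zset N M → ρ * a k ≤ a (k + 1))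
    {k : ℤ} (hk : k ∈ zset N M) (m : ℕ) (hkm : k + m ∈ zset N M) :
    ρ ^ m * a k ≤ a (k + m) := by
  induction m with
  | zero => simp
  | succ m ih =>
    have hm : k + m ∈ zset N M := mem_zset_of_le_of_le hk hkm (by omega) (by omega)
    calc ρ ^ (m + 1) * a k = ρ * (ρ ^ m * a k) := by ring
      _ ≤ ρ * a (k + m) := by gcongr; exact ih hm
      _ ≤ a (k + (m + 1 : ℕ)) := by
        rw [Nat.cast_succ, ← add_assoc]; exact hinc _ hm (by rwa [add_assoc, ← Nat.cast_succ])

lemma le_rpow_inv_mul_pow_of_mul_rpow_le {x a₀ a A r s : ℝ≥0∞} {β : ℝ} {m : ℕ} (hβ : 0 < β)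
    (ha₀ : a₀ ≠ 0) (ha₀' : a₀ ≠ ⊤) (hr : r ≠ 0) (hr' : r ≠ ⊤) (hrs : r⁻¹ ^ β⁻¹ ≤ s ^ 2)
    (hinc : r ^ m * a₀ ≤ a) (h : a * x ^ β ≤ A) :
    x ≤ (A / a₀) ^ β⁻¹ * s ^ (2 * m) := by
  have hx : x ^ β ≤ A / (r ^ m * a₀) := by
    rw [ENNReal.le_div_iff_mul_le (Or.inl (by simp [hr, ha₀])) (Or.inl (by finiteness)), mul_comm]
    exact (mul_le_mul_left hinc _).trans h
  calc x = (x ^ β) ^ β⁻¹ := (rpow_rpow_inv hβ.ne' x).symm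
    _ ≤ (A / (r ^ m * a₀)) ^ β⁻¹ := rpow_le_rpow hx (by positivity)
    _ = (A / a₀ * r⁻¹ ^ m) ^ β⁻¹ := by
      rw [div_eq_mul_inv, div_eq_mul_inv, ENNReal.mul_inv (Or.inl (by simp [hr]))
        (Or.inl (by finiteness)), ENNReal.inv_pow, mul_comm (r⁻¹ ^ m), mul_assoc]
    _ = (A / a₀) ^ β⁻¹ * (r⁻¹ ^ β⁻¹) ^ m := by
      rw [mul_rpow_of_nonneg _ _ (by positivity), ← rpow_natCast_mul, mul_comm (m : ℝ),
        rpow_mul_natCast]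
    _ ≤ (A / a₀) ^ β⁻¹ * s ^ (2 * m) := by
      rw [pow_mul]; gcongr

lemma ofReal_diag_mul_tail_le {N M : EReal} {a b : ℤ → ℝ} {d : ℤ → ℤ → ℝ} {β ρ : ℝ}
    {s A : ℝ≥0∞} (hβ : 0 < β) (hρ : 1 < ρ) (hρs : (ENNReal.ofReal ρ)⁻¹ ^ β⁻¹ ≤ s ^ 2)
    (ha : ∀ k, 0 < a k) (hinc : ∀ k : ℤ, k ∈ zset N M → (k + 1) ∈ zset N M → ρ * a k ≤ a (k + 1))
    (hA : ∀ j : zset N M, ENNReal.ofReal (a (j : ℤ)) *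
      ENNReal.ofReal (d (j : ℤ) ((j : ℤ) + 1)) ^ β *
      (∑' i : zset (((j : ℤ) : ℝ) : EReal) M, ENNReal.ofReal (b (i : ℤ))) ^ β ≤ A)
    {k : ℤ} (hk : k ∈ zset N M) (m : ℕ) (hm : (((k + m : ℤ) : ℝ) : EReal) ≤ M) :
    ENNReal.ofReal (d (k + m) (k + m + 1)) *
        ∑' i : zset (((k + m : ℤ) : ℝ) : EReal) M, ENNReal.ofReal (b i) ≤
      (A / ENNReal.ofReal (a k)) ^ β⁻¹ * s ^ (2 * m) := by
  have hkm : k + m ∈ zset N M := ⟨hk.1.trans (intCast_ereal_le_intCast.2 (by omega)), hm⟩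
  refine le_rpow_inv_mul_pow_of_mul_rpow_le (a := ENNReal.ofReal (a (k + m))) hβ
    (ENNReal.ofReal_pos.2 (ha k)).ne' ENNReal.ofReal_ne_top
    (ENNReal.ofReal_pos.2 (zero_lt_one.trans hρ)).ne' ENNReal.ofReal_ne_top hρs ?_ ?_
  · rw [← ENNReal.ofReal_pow (by linarith), ← ENNReal.ofReal_mul (by positivity)]
    exact ENNReal.ofReal_le_ofReal (pow_mul_le_of_strongly_increasing (by linarith) hinc hk m hkm)
  · rw [mul_rpow_of_nonneg _ _ hβ.le, ← mul_assoc]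
    exact hA ⟨k + m, hkm⟩

lemma ofReal_mul_rpow_tsum_kernel_le {N M : EReal} {a b : ℤ → ℝ} {d : ℤ → ℤ → ℝ}
    {K α β ρ : ℝ} {s A : ℝ≥0∞} (hβ : 0 < β) (hρ : 1 < ρ) (hα : 0 < α) (hK : 0 ≤ K)
    (hs : s ≠ ⊤) (hρs : (ENNReal.ofReal ρ)⁻¹ ^ β⁻¹ ≤ s ^ 2) (ha : ∀ k, 0 < a k)
    (hinc : ∀ k : ℤ, k ∈ zset N M → (k + 1) ∈ zset N M → ρ * a k ≤ a (k + 1))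
    (hd : ∀ k i, 0 ≤ d k i)
    (hchain : ∀ (k : ℤ) (n : ℕ), d k (k + (n + 1 : ℕ)) ≤
      K * (∑ m ∈ range (n + 1), d (k + m) (k + (m + 1 : ℕ)) ^ α) ^ α⁻¹)
    (hA : ∀ j : zset N M, ENNReal.ofReal (a (j : ℤ)) *
      ENNReal.ofReal (d (j : ℤ) ((j : ℤ) + 1)) ^ β *
      (∑' i : zset (((j : ℤ) : ℝ) : EReal) M, ENNReal.ofReal (b (i : ℤ))) ^ β ≤ A)
    (hA' : A ≠ ⊤) {k : ℤ} (hk : k ∈ zset N M) :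
    ENNReal.ofReal (a k) * (∑' i : zset ((k : ℝ) : EReal) M,
        ENNReal.ofReal (d k (i + 1)) * ENNReal.ofReal (b i)) ^ β ≤
      (ENNReal.ofReal K * ((1 - s ^ α)⁻¹) ^ α⁻¹ * (1 - s)⁻¹) ^ β * A := by
  set K' := ENNReal.ofReal K * ((1 - s ^ α)⁻¹) ^ α⁻¹ * (1 - s)⁻¹
  have hak : ENNReal.ofReal (a k) ≠ 0 := (ENNReal.ofReal_pos.2 (ha k)).ne'
  set T := (A / ENNReal.ofReal (a k)) ^ β⁻¹
  have hsum : ∑' i : zset ((k : ℝ) : EReal) M,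
      ENNReal.ofReal (d k (i + 1)) * ENNReal.ofReal (b i) ≤ K' * T :=
    tsum_zset_kernel_mul_le (d := fun k i => ENNReal.ofReal (d k i))
      (b := fun i => ENNReal.ofReal (b i)) hα
      (rpow_ne_top_of_nonneg (by positivity) (div_ne_top hA' hak)) hs k M
      (fun n => ofReal_le_ofReal_mul_sum_rpow hK (fun _ => hd _ _) hα (hchain k n))
      (ofReal_diag_mul_tail_le hβ hρ hρs ha hinc hA hk)
  calc ENNReal.ofReal (a k) * (∑' i : zset ((k : ℝ) : EReal) M,
        ENNReal.ofReal (d k (i + 1)) * ENNReal.ofReal (b i)) ^ β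
      ≤ ENNReal.ofReal (a k) * (K' * T) ^ β := by gcongr
    _ = K' ^ β * (ENNReal.ofReal (a k) * (A / ENNReal.ofReal (a k))) := by
      rw [mul_rpow_of_nonneg _ _ hβ.le, rpow_inv_rpow hβ.ne']; ring
    _ ≤ K' ^ β * A := by gcongr; exact ENNReal.mul_div_le

theorem exists_sup_kernel_sum_le {β ρ : ℝ} (hβ : 0 < β) (hρ : 1 < ρ) (cd : ℝ) :
    ∃ C : ℝ, 0 < C ∧ ∀ (N M : EReal) (a b : ℤ → ℝ) (d : ℤ → ℤ → ℝ), (∀ k, 0 < a k) →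
      (∀ k : ℤ, k ∈ zset N M → (k + 1) ∈ zset N M → ρ * a k ≤ a (k + 1)) →
      (∀ k i, 0 ≤ d k i) →
      (∀ k j i : ℤ, k ≤ j → j ≤ i → d k i ≤ cd * (d k j + d j i)) →
      (⨆ k : zset N M, ENNReal.ofReal (a (k : ℤ)) *
          (∑' i : zset (((k : ℤ) : ℝ) : EReal) M,
            ENNReal.ofReal (d (k : ℤ) ((i : ℤ) + 1)) * ENNReal.ofReal (b (i : ℤ))) ^ β) ≤
        ENNReal.ofReal C *
          (⨆ k : zset N M, ENNReal.ofReal (a (k : ℤ)) *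
              ENNReal.ofReal (d (k : ℤ) ((k : ℤ) + 1)) ^ β *
              (∑' i : zset (((k : ℤ) : ℝ) : EReal) M, ENNReal.ofReal (b (i : ℤ))) ^ β) := by
  obtain ⟨K, α, hK, hα, hchain⟩ := exists_kernel_le_mul_sum_rpow cd
  set s : ℝ≥0∞ := (ENNReal.ofReal ρ)⁻¹ ^ (2 * β)⁻¹
  have hs : s < 1 :=
    rpow_lt_one (ENNReal.inv_lt_one.2 (ENNReal.one_lt_ofReal.2 hρ)) (by positivity)
  have hρs : (ENNReal.ofReal ρ)⁻¹ ^ β⁻¹ = s ^ 2 := by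
    rw [← rpow_natCast, ← rpow_mul]; congr 1; field_simp; norm_num
  set K' : ℝ≥0∞ := ENNReal.ofReal K * ((1 - s ^ α)⁻¹) ^ α⁻¹ * (1 - s)⁻¹
  have h₁ : (1 - s ^ α)⁻¹ ≠ ⊤ := ENNReal.inv_ne_top.2 (tsub_pos_of_lt (rpow_lt_one hs hα)).ne'
  have h₂ : (1 - s)⁻¹ ≠ ⊤ := ENNReal.inv_ne_top.2 (tsub_pos_of_lt hs).ne'
  have hK'0 : K' ≠ 0 :=
    mul_ne_zero (mul_ne_zero (ENNReal.ofReal_pos.2 hK).ne'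
      (ENNReal.rpow_pos (ENNReal.inv_pos.2 (by finiteness)) h₁).ne')
      (ENNReal.inv_ne_zero.2 (by finiteness))
  have hC : K' ^ β ≠ 0 := (ENNReal.rpow_pos (pos_iff_ne_zero.2 hK'0) (by finiteness)).ne'
  have hC' : K' ^ β ≠ ⊤ := by finiteness
  refine ⟨(K' ^ β).toReal, ENNReal.toReal_pos hC hC', fun N M a b d ha hinc hd htri => ?_⟩
  rw [ENNReal.ofReal_toReal hC']
  rcases eq_or_ne (⨆ k : zset N M, ENNReal.ofReal (a (k : ℤ)) *
      ENNReal.ofReal (d (k : ℤ) ((k : ℤ) + 1)) ^ β *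
      (∑' i : zset (((k : ℤ) : ℝ) : EReal) M, ENNReal.ofReal (b (i : ℤ))) ^ β) ⊤ with hA | hA
  · rw [hA, mul_top hC]; exact le_top
  refine iSup_le fun ⟨k, hk⟩ => ofReal_mul_rpow_tsum_kernel_le hβ hρ hα hK.le hs.ne_top hρs.le
    ha hinc hd (fun k n => ?_) (fun j => le_iSup_of_le j le_rfl) hA hk
  simpa using hchain (fun p q => d (k + p) (k + q)) (fun _ _ => hd _ _)
    (fun _ _ _ h₁ h₂ => htri _ _ _ (by omega) (by omega)) n

lemma sup_diag_le_sup_kernel_sum {N M : EReal} {a b : ℤ → ℝ} {d : ℤ → ℤ → ℝ} {β : ℝ}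
    (hβ : 0 ≤ β) (hmono : ∀ k j i : ℤ, j ≤ i → d k j ≤ d k i) :
    (⨆ k : zset N M, ENNReal.ofReal (a (k : ℤ)) *
        ENNReal.ofReal (d (k : ℤ) ((k : ℤ) + 1)) ^ β *
        (∑' i : zset (((k : ℤ) : ℝ) : EReal) M, ENNReal.ofReal (b (i : ℤ))) ^ β) ≤
      ⨆ k : zset N M, ENNReal.ofReal (a (k : ℤ)) *
        (∑' i : zset (((k : ℤ) : ℝ) : EReal) M,
          ENNReal.ofReal (d (k : ℤ) ((i : ℤ) + 1)) * ENNReal.ofReal (b (i : ℤ))) ^ β := by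
  refine iSup_mono fun k => ?_
  rw [mul_assoc, ← mul_rpow_of_nonneg _ _ hβ, ← ENNReal.tsum_mul_left]
  gcongr with i
  exact hmono _ _ _ (by have := (mem_zset_intCast.1 i.2).1; omega)

theorem sup_kernel_sum_of_strongly_increasing_general (β ρ cd : ℝ)
    (hβ : 0 ≤ β) (hρ : 1 < ρ) :
    ∃ c C : ℝ, 0 < c ∧ 0 < C ∧
      ∀ (N M : EReal), N < M → ∀ (a b : ℤ → ℝ) (d : ℤ → ℤ → ℝ),
        (∀ k, 0 < a k) → (∀ k, 0 < b k) →
        (∀ k : ℤ, k ∈ zset N M → (k + 1) ∈ zset N M → ρ * a k ≤ a (k + 1)) →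
        (∀ k i, 0 ≤ d k i) →
        (∀ k j i : ℤ, k ≤ j → d j i ≤ d k i) →
        (∀ k j i : ℤ, j ≤ i → d k j ≤ d k i) →
        (∀ k j i : ℤ, k ≤ j → j ≤ i → d k i ≤ cd * (d k j + d j i)) →
        ENNReal.ofReal c *
            (⨆ k : zset N M, ENNReal.ofReal (a (k : ℤ)) *
                ENNReal.ofReal (d (k : ℤ) ((k : ℤ) + 1)) ^ β *
                (∑' i : zset (((k : ℤ) : ℝ) : EReal) M, ENNReal.ofReal (b (i : ℤ))) ^ β) ≤
          (⨆ k : zset N M, ENNReal.ofReal (a (k : ℤ)) *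
              (∑' i : zset (((k : ℤ) : ℝ) : EReal) M,
                ENNReal.ofReal (d (k : ℤ) ((i : ℤ) + 1)) * ENNReal.ofReal (b (i : ℤ))) ^ β) ∧
        (⨆ k : zset N M, ENNReal.ofReal (a (k : ℤ)) *
            (∑' i : zset (((k : ℤ) : ℝ) : EReal) M,
              ENNReal.ofReal (d (k : ℤ) ((i : ℤ) + 1)) * ENNReal.ofReal (b (i : ℤ))) ^ β) ≤
          ENNReal.ofReal C *
            (⨆ k : zset N M, ENNReal.ofReal (a (k : ℤ)) *
                ENNReal.ofReal (d (k : ℤ) ((k : ℤ) + 1)) ^ β *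
                (∑' i : zset (((k : ℤ) : ℝ) : EReal) M, ENNReal.ofReal (b (i : ℤ))) ^ β) := by
  rcases hβ.eq_or_lt with rfl | hβ
  · exact ⟨1, 1, one_pos, one_pos, fun N M _ a b d _ _ _ _ _ _ _ => by simp⟩
  obtain ⟨C, hC, hupper⟩ := exists_sup_kernel_sum_le hβ hρ cd
  refine ⟨1, C, one_pos, hC, fun N M _ a b d ha _ hinc hd _ hmono htri =>
    ⟨?_, hupper N M a b d ha hinc hd htri⟩⟩
  rw [ENNReal.ofReal_one, one_mul]
  exact sup_diag_le_sup_kernel_sum hβ.le hmono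

theorem sup_kernel_sum_of_strongly_increasing (β ρ cd : ℝ)
    (hβ : 0 ≤ β) (hρ : 1 < ρ) (hcd : 0 < cd) :
    ∃ c C : ℝ, 0 < c ∧ 0 < C ∧
      ∀ (N M : EReal), N < M → ∀ (a b : ℤ → ℝ) (d : ℤ → ℤ → ℝ),
        (∀ k, 0 < a k) → (∀ k, 0 < b k) →
        (∀ k : ℤ, k ∈ zset N M → (k + 1) ∈ zset N M → ρ * a k ≤ a (k + 1)) →
        (∀ k i, 0 ≤ d k i) →
        (∀ k j i : ℤ, k ≤ j → d j i ≤ d k i) →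
        (∀ k j i : ℤ, j ≤ i → d k j ≤ d k i) →
        (∀ k j i : ℤ, k ≤ j → j ≤ i → d k i ≤ cd * (d k j + d j i)) →
        ENNReal.ofReal c *
            (⨆ k : zset N M, ENNReal.ofReal (a (k : ℤ)) *
                ENNReal.ofReal (d (k : ℤ) ((k : ℤ) + 1)) ^ β *
                (∑' i : zset (((k : ℤ) : ℝ) : EReal) M, ENNReal.ofReal (b (i : ℤ))) ^ β) ≤
          (⨆ k : zset N M, ENNReal.ofReal (a (k : ℤ)) *
              (∑' i : zset (((k : ℤ) : ℝ) : EReal) M,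
                ENNReal.ofReal (d (k : ℤ) ((i : ℤ) + 1)) * ENNReal.ofReal (b (i : ℤ))) ^ β) ∧
        (⨆ k : zset N M, ENNReal.ofReal (a (k : ℤ)) *
            (∑' i : zset (((k : ℤ) : ℝ) : EReal) M,
              ENNReal.ofReal (d (k : ℤ) ((i : ℤ) + 1)) * ENNReal.ofReal (b (i : ℤ))) ^ β) ≤
          ENNReal.ofReal C *
            (⨆ k : zset N M, ENNReal.ofReal (a (k : ℤ)) *
                ENNReal.ofReal (d (k : ℤ) ((k : ℤ) + 1)) ^ β *
                (∑' i : zset (((k : ℤ) : ℝ) : EReal) M, ENNReal.ofReal (b (i : ℤ))) ^ β) :=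
  sup_kernel_sum_of_strongly_increasing_general β ρ cd hβ hρ
end

section
/- Let β > 0, let w be a weight on (a,b) with 0 < W(x) := ∫_x^b w < ∞ for all x ∈ (a,b), and let {x_k}_{k=N}^∞ be a discretizing sequence of W (i.e. a strictly increasing sequence in [a,b] with W(x_k) ≈ 2^{−k}). Then for every nonnegative non-decreasing function h on (a,b) and every n ≥ N: ∫_{x_n}^b W(x)^{β−1} w(x) h(x) dx ≈ Σ_{k=n+1}^∞ 2^{−kβ} h(x_k), with constants depending only on β and the discretization constants. -/
/-!
Reindex by `y j = x_{n+j}`, so that `W (y j) ≈ 2⁻ʲ τ`. On `(y j, y (j+1)]` one has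
`W ≈ 2⁻ʲ τ`, `h ≤ h (y (j+1))` and `∫ w ≤ W (y j)`; these intervals tile `(x_n, b)` because
`W > 0` there while `W (y j) → 0`, which gives the upper bound. For the lower bound fix `m` with
`2⁻ᵐ c₂ ≤ c₁ / 2`: then `∫ w ≥ W (y j) - W (y (j+m)) ≳ 2⁻ʲ τ` over `(y j, y (j+m)]`, where
`W ≈ 2⁻ʲ τ` and `h ≥ h (y j)`, and each point lies in at most `m` of these intervals.
-/

open MeasureTheory Set ENNReal

/-- The interval `(x, y)` in `ℝ` with extended-real endpoints. -/
def erIoo (x y : EReal) : Set ℝ := {t : ℝ | x < (t : EReal) ∧ (t : EReal) < y}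

/-- `W(x) = ∫_x^b w`. -/
noncomputable def Wf (w : ℝ → ℝ≥0∞) (b : EReal) (x : ℝ) : ℝ≥0∞ :=
  ∫⁻ t in erIoo (x : EReal) b, w t

open Filter Topology

namespace ENNReal

lemma rpow_le_rpow_of_nonpos {x y : ℝ≥0∞} {z : ℝ} (hxy : x ≤ y) (hz : z ≤ 0) :
    y ^ z ≤ x ^ z := by
  rw [← neg_neg z, rpow_neg y, rpow_neg x]
  exact ENNReal.inv_le_inv.2 (rpow_le_rpow hxy (neg_nonneg.2 hz))

lemma rpow_sub_one_mul {x : ℝ≥0∞} (hx0 : x ≠ 0) (hx : x ≠ ⊤) (r : ℝ) :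
    x ^ (r - 1) * x = x ^ r := by
  conv_rhs => rw [← sub_add_cancel r 1, rpow_add _ _ hx0 hx, rpow_one]

lemma rpow_le_max_mul_rpow {u s A B : ℝ≥0∞} (hA : A ≠ 0) (hs : s ≠ 0)
    (hAu : A * s ≤ u) (huB : u ≤ B * s) (r : ℝ) : u ^ r ≤ max (A ^ r) (B ^ r) * s ^ r := by
  rcases le_total 0 r with hr | hr
  · calc u ^ r ≤ (B * s) ^ r := rpow_le_rpow huB hr
      _ = B ^ r * s ^ r := mul_rpow_of_nonneg _ _ hr
      _ ≤ _ := by gcongr; exact le_max_right _ _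
  · calc u ^ r ≤ (A * s) ^ r := rpow_le_rpow_of_nonpos hAu hr
      _ = A ^ r * s ^ r := mul_rpow_of_ne_zero hA hs r
      _ ≤ _ := by gcongr; exact le_max_left _ _

lemma min_mul_rpow_le_rpow {u s A B : ℝ≥0∞} (hB : B ≠ 0) (hs : s ≠ 0)
    (hAu : A * s ≤ u) (huB : u ≤ B * s) (r : ℝ) : min (A ^ r) (B ^ r) * s ^ r ≤ u ^ r := by
  rcases le_total 0 r with hr | hr
  · calc min (A ^ r) (B ^ r) * s ^ r ≤ A ^ r * s ^ r := by gcongr; exact min_le_left _ _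
      _ = (A * s) ^ r := (mul_rpow_of_nonneg _ _ hr).symm
      _ ≤ u ^ r := rpow_le_rpow hAu hr
  · calc min (A ^ r) (B ^ r) * s ^ r ≤ B ^ r * s ^ r := by gcongr; exact min_le_right _ _
      _ = (B * s) ^ r := (mul_rpow_of_ne_zero hB hs r).symm
      _ ≤ u ^ r := rpow_le_rpow_of_nonpos huB hr

lemma exists_pos_mul_inv_two_pow_le {A B : ℝ≥0∞} (hA : A ≠ 0) (hB : B ≠ ⊤) :
    ∃ m : ℕ, 0 < m ∧ B * 2⁻¹ ^ m ≤ A / 2 := by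
  obtain ⟨m, hm⟩ :=
    exists_inv_two_pow_lt (ENNReal.div_pos (ENNReal.div_pos hA (ofNat_ne_top (n := 2))).ne' hB).ne'
  refine ⟨m + 1, m.succ_pos, ?_⟩
  calc B * 2⁻¹ ^ (m + 1) ≤ B * (A / 2 / B) := by
        gcongr
        exact (pow_le_pow_right_of_le_one' (by norm_num) m.le_succ).trans hm.le
    _ ≤ A / 2 := mul_div_le

lemma inv_two_pow_mul_ne_zero {τ : ℝ≥0∞} (hτ : τ ≠ 0) (j : ℕ) : 2⁻¹ ^ j * τ ≠ 0 := by simp [hτ]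

lemma inv_two_pow_mul_ne_top {τ : ℝ≥0∞} (hτ : τ ≠ ⊤) (j : ℕ) : 2⁻¹ ^ j * τ ≠ ⊤ :=
  mul_ne_top (pow_ne_top (inv_ne_top.2 two_ne_zero)) hτ

end ENNReal

namespace Monotone

variable {y : ℕ → ℝ}

lemma setLIntegral_Ioc_eq_sum (hy : Monotone y) (f : ℝ → ℝ≥0∞) (k l : ℕ) :
    ∫⁻ x in Ioc (y k) (y l), f x = ∑ i ∈ Finset.Ico k l, ∫⁻ x in Ioc (y i) (y (i + 1)), f x := by
  rw [← hy.biUnion_Ico_Ioc_map_succ, ← Finset.coe_Ico]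
  exact lintegral_biUnion_finset (hy.pairwise_disjoint_on_Ioc_succ.set_pairwise _)
    (fun _ _ => measurableSet_Ioc) f

lemma tsum_setLIntegral_Ioc_le (hy : Monotone y) (f : ℝ → ℝ≥0∞) (m : ℕ) :
    ∑' j, ∫⁻ x in Ioc (y (j + 1)) (y (j + 1 + m)), f x ≤
      m * ∑' j, ∫⁻ x in Ioc (y j) (y (j + 1)), f x := by
  set I := fun j => ∫⁻ x in Ioc (y j) (y (j + 1)), f x
  calc ∑' j, ∫⁻ x in Ioc (y (j + 1)) (y (j + 1 + m)), f x
      = ∑' j, ∑ i ∈ Finset.range m, I (j + 1 + i) := by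
        refine tsum_congr fun j => ?_
        rw [hy.setLIntegral_Ioc_eq_sum, Finset.sum_Ico_eq_sum_range, add_tsub_cancel_left]
    _ = ∑ i ∈ Finset.range m, ∑' j, I (j + 1 + i) :=
        Summable.tsum_finsetSum fun _ _ => ENNReal.summable
    _ ≤ ∑ _i ∈ Finset.range m, ∑' j, I j :=
        Finset.sum_le_sum fun i _ =>
          ENNReal.tsum_comp_le_tsum_of_injective (fun _ _ h => by simpa using h) I
    _ = m * ∑' j, I j := by rw [Finset.sum_const, Finset.card_range, nsmul_eq_mul]

lemma tsum_setLIntegral_Ioc (hy : Monotone y) (f : ℝ → ℝ≥0∞) :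
    ∑' j, ∫⁻ x in Ioc (y j) (y (j + 1)), f x = ∫⁻ x in ⋃ j, Ioc (y j) (y (j + 1)), f x :=
  (lintegral_iUnion (fun _ => measurableSet_Ioc) hy.pairwise_disjoint_on_Ioc_succ f).symm

lemma Ioc_subset_erIoo {b : EReal} (hy : Monotone y) (hyb : ∀ j, (y j : EReal) < b) (i k : ℕ) :
    Ioc (y i) (y k) ⊆ erIoo (y 0) b := fun _ hx =>
  ⟨EReal.coe_lt_coe_iff.2 ((hy i.zero_le).trans_lt hx.1),
    (EReal.coe_le_coe_iff.2 hx.2).trans_lt (hyb k)⟩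

lemma iUnion_Ioc_subset_erIoo {b : EReal} (hy : Monotone y) (hyb : ∀ j, (y j : EReal) < b) :
    ⋃ j, Ioc (y j) (y (j + 1)) ⊆ erIoo (y 0) b :=
  iUnion_subset fun j => hy.Ioc_subset_erIoo hyb j (j + 1)

lemma erIoo_subset_iUnion_Ioc {b : EReal} (hy : Monotone y)
    (hcover : ∀ x ∈ erIoo (y 0) b, ∃ j, x ≤ y j) :
    erIoo (y 0) b ⊆ ⋃ j, Ioc (y j) (y (j + 1)) := by
  intro x hx
  obtain ⟨l, hl⟩ := hcover x hx
  have hxl : x ∈ Ioc (y 0) (y l) := ⟨EReal.coe_lt_coe_iff.1 hx.1, hl⟩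
  rw [← hy.biUnion_Ico_Ioc_map_succ] at hxl
  obtain ⟨i, -, hi⟩ := mem_iUnion₂.1 hxl
  exact mem_iUnion.2 ⟨i, hi⟩

end Monotone

section Wf

variable (w : ℝ → ℝ≥0∞) (b : EReal)

lemma Wf_antitone : Antitone (Wf w b) := fun _ _ hxy =>
  lintegral_mono_set fun _ ht => ⟨(EReal.coe_le_coe_iff.2 hxy).trans_lt ht.1, ht.2⟩

lemma Wf_le_setLIntegral_Ioc_add (u v : ℝ) :
    Wf w b u ≤ (∫⁻ t in Ioc u v, w t) + Wf w b v := by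
  refine (lintegral_mono_set fun t ht => ?_).trans (lintegral_union_le _ _ (erIoo v b))
  rcases le_or_gt t v with htv | hvt
  · exact Or.inl ⟨EReal.coe_lt_coe_iff.1 ht.1, htv⟩
  · exact Or.inr ⟨EReal.coe_lt_coe_iff.2 hvt, ht.2⟩

variable {w b}

lemma setLIntegral_Ioc_le_Wf {u v : ℝ} (hv : (v : EReal) < b) :
    ∫⁻ t in Ioc u v, w t ≤ Wf w b u :=
  lintegral_mono_set fun _ ht =>
    ⟨EReal.coe_lt_coe_iff.2 ht.1, (EReal.coe_le_coe_iff.2 ht.2).trans_lt hv⟩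

lemma coe_lt_of_Wf_ne_zero {u : ℝ} (hu : Wf w b u ≠ 0) : (u : EReal) < b := by
  by_contra! hbu
  have hempty : erIoo u b = ∅ := eq_empty_of_forall_notMem fun _ ht => (ht.1.trans ht.2).not_ge hbu
  exact hu (by simp [Wf, hempty])

end Wf

/-- The paper's `W (x_k) ≈ 2⁻ᵏ`, reindexed by `y j = x_{n+j}` with `τ = 2⁻ⁿ`. -/
def IsDyadicDiscretization (W : ℝ → ℝ≥0∞) (A B τ : ℝ≥0∞) (y : ℕ → ℝ) : Prop :=
  ∀ j, A * (2⁻¹ ^ j * τ) ≤ W (y j) ∧ W (y j) ≤ B * (2⁻¹ ^ j * τ)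

namespace IsDyadicDiscretization

variable {w : ℝ → ℝ≥0∞} {b : EReal} {y : ℕ → ℝ} {A B τ : ℝ≥0∞} {h : ℝ → ℝ≥0∞}

lemma coe_lt (hW : IsDyadicDiscretization (Wf w b) A B τ y) (hA : A ≠ 0) (hτ : τ ≠ 0) (j : ℕ) :
    (y j : EReal) < b :=
  coe_lt_of_Wf_ne_zero <| ((mul_ne_zero hA (inv_two_pow_mul_ne_zero hτ j)).bot_lt.trans_le
    (hW j).1).ne'

lemma exists_le (hW : IsDyadicDiscretization (Wf w b) A B τ y) (hB : B ≠ ⊤) (hτ : τ ≠ ⊤)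
    {x : ℝ} (hx : Wf w b x ≠ 0) : ∃ j, x ≤ y j := by
  have hlim : Tendsto (fun j : ℕ => B * (2⁻¹ ^ j * τ)) atTop (𝓝 0) := by
    simpa using ENNReal.Tendsto.const_mul
      (ENNReal.Tendsto.mul_const (ENNReal.tendsto_pow_atTop_nhds_zero_of_lt_one
        (ENNReal.inv_lt_one.2 one_lt_two)) (Or.inr hτ))
      (Or.inr hB)
  obtain ⟨j, hj⟩ := (hlim.eventually (gt_mem_nhds (pos_iff_ne_zero.2 hx))).exists
  exact ⟨j, le_of_not_ge fun hyx => ((hW j).2.trans_lt hj).not_ge (Wf_antitone w b hyx)⟩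

lemma le_setLIntegral_Ioc (hW : IsDyadicDiscretization (Wf w b) A B τ y) (hA : A ≠ ⊤)
    (hB : B ≠ 0) (hτ₀ : τ ≠ 0) (hτ : τ ≠ ⊤) {m : ℕ} (hm : B * 2⁻¹ ^ m ≤ A / 2) (β : ℝ) (j : ℕ)
    (hh : ∀ x ∈ Ioc (y j) (y (j + m)), h (y j) ≤ h x) :
    min ((A * 2⁻¹ ^ m) ^ (β - 1)) (B ^ (β - 1)) * (A / 2) * ((2⁻¹ ^ j * τ) ^ β * h (y j)) ≤
      ∫⁻ x in Ioc (y j) (y (j + m)), Wf w b x ^ (β - 1) * w x * h x := by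
  set q := 2⁻¹ ^ j * τ
  have hq₀ : q ≠ 0 := inv_two_pow_mul_ne_zero hτ₀ j
  have hq : q ≠ ⊤ := inv_two_pow_mul_ne_top hτ j
  have hshift : 2⁻¹ ^ (j + m) * τ = 2⁻¹ ^ m * q := by rw [pow_add]; ring
  have hmass : A / 2 * q ≤ ∫⁻ x in Ioc (y j) (y (j + m)), w x := by
    refine (ENNReal.add_le_add_iff_right (mul_ne_top (div_ne_top hA two_ne_zero) hq)).1 ?_
    calc A / 2 * q + A / 2 * q = A * q := by rw [← add_mul, ENNReal.add_halves]
      _ ≤ Wf w b (y j) := (hW j).1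
      _ ≤ (∫⁻ x in Ioc (y j) (y (j + m)), w x) + Wf w b (y (j + m)) :=
        Wf_le_setLIntegral_Ioc_add w b _ _
      _ ≤ (∫⁻ x in Ioc (y j) (y (j + m)), w x) + A / 2 * q := by
        gcongr
        calc Wf w b (y (j + m)) ≤ B * (2⁻¹ ^ (j + m) * τ) := (hW _).2
          _ = B * 2⁻¹ ^ m * q := by rw [hshift, mul_assoc]
          _ ≤ A / 2 * q := by gcongr
  set D := min ((A * 2⁻¹ ^ m) ^ (β - 1)) (B ^ (β - 1))
  have hpow : ∀ x ∈ Ioc (y j) (y (j + m)), D * q ^ (β - 1) ≤ Wf w b x ^ (β - 1) := by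
    intro x hx
    refine min_mul_rpow_le_rpow hB hq₀ ?_ ((Wf_antitone w b hx.1.le).trans (hW j).2) _
    calc A * 2⁻¹ ^ m * q = A * (2⁻¹ ^ (j + m) * τ) := by rw [hshift, mul_assoc]
      _ ≤ Wf w b (y (j + m)) := (hW _).1
      _ ≤ Wf w b x := Wf_antitone w b hx.2
  calc D * (A / 2) * (q ^ β * h (y j)) = D * q ^ (β - 1) * h (y j) * (A / 2 * q) := by
        rw [← rpow_sub_one_mul hq₀ hq β]; ring
    _ ≤ D * q ^ (β - 1) * h (y j) * ∫⁻ x in Ioc (y j) (y (j + m)), w x := by gcongr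
    _ ≤ ∫⁻ x in Ioc (y j) (y (j + m)), D * q ^ (β - 1) * h (y j) * w x :=
        lintegral_const_mul_le _ _
    _ ≤ _ := setLIntegral_mono' measurableSet_Ioc fun x hx => by
        rw [mul_right_comm]
        gcongr
        exacts [hpow x hx, hh x hx]

lemma setLIntegral_Ioc_le (hW : IsDyadicDiscretization (Wf w b) A B τ y) (hw : Measurable w)
    (hA : A ≠ 0) (hτ₀ : τ ≠ 0) (hτ : τ ≠ ⊤) (β : ℝ) (j : ℕ)
    (hh : ∀ x ∈ Ioc (y j) (y (j + 1)), h x ≤ h (y (j + 1))) :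
    ∫⁻ x in Ioc (y j) (y (j + 1)), Wf w b x ^ (β - 1) * w x * h x ≤
      max (A ^ (β - 1)) ((2 * B) ^ (β - 1)) * (2 * B) *
        ((2⁻¹ ^ (j + 1) * τ) ^ β * h (y (j + 1))) := by
  have hdouble : B * (2⁻¹ ^ j * τ) = 2 * B * (2⁻¹ ^ (j + 1) * τ) := by
    rw [pow_succ, show (2 : ℝ≥0∞) * B * (2⁻¹ ^ j * 2⁻¹ * τ) = B * (2⁻¹ ^ j * τ) * (2 * 2⁻¹) by ring,
      ENNReal.mul_inv_cancel two_ne_zero ofNat_ne_top, mul_one]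
  set q := 2⁻¹ ^ (j + 1) * τ
  have hq₀ : q ≠ 0 := inv_two_pow_mul_ne_zero hτ₀ (j + 1)
  have hq : q ≠ ⊤ := inv_two_pow_mul_ne_top hτ (j + 1)
  have hupper : ∀ x ∈ Ioc (y j) (y (j + 1)), Wf w b x ≤ 2 * B * q := fun x hx =>
    ((Wf_antitone w b hx.1.le).trans (hW j).2).trans_eq hdouble
  set D := max (A ^ (β - 1)) ((2 * B) ^ (β - 1))
  have hpow : ∀ x ∈ Ioc (y j) (y (j + 1)), Wf w b x ^ (β - 1) ≤ D * q ^ (β - 1) := fun x hx =>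
    rpow_le_max_mul_rpow hA hq₀ ((hW (j + 1)).1.trans (Wf_antitone w b hx.2)) (hupper x hx) _
  calc ∫⁻ x in Ioc (y j) (y (j + 1)), Wf w b x ^ (β - 1) * w x * h x
      ≤ ∫⁻ x in Ioc (y j) (y (j + 1)), D * q ^ (β - 1) * h (y (j + 1)) * w x :=
        setLIntegral_mono' measurableSet_Ioc fun x hx => by
          rw [mul_right_comm]
          gcongr
          exacts [hpow x hx, hh x hx]
    _ = D * q ^ (β - 1) * h (y (j + 1)) * ∫⁻ x in Ioc (y j) (y (j + 1)), w x :=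
        lintegral_const_mul _ hw
    _ ≤ D * q ^ (β - 1) * h (y (j + 1)) * (2 * B * q) := by
        gcongr
        exact (setLIntegral_Ioc_le_Wf (hW.coe_lt hA hτ₀ (j + 1))).trans ((hW j).2.trans_eq hdouble)
    _ = D * (2 * B) * (q ^ β * h (y (j + 1))) := by rw [← rpow_sub_one_mul hq₀ hq β]; ring

lemma succ_mem_erIoo (hW : IsDyadicDiscretization (Wf w b) A B τ y) (hy : StrictMono y)
    (hA : A ≠ 0) (hτ : τ ≠ 0) (j : ℕ) : y (j + 1) ∈ erIoo (y 0) b :=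
  hy.monotone.Ioc_subset_erIoo (hW.coe_lt hA hτ) 0 (j + 1) ⟨hy j.succ_pos, le_rfl⟩

theorem tsum_le_setLIntegral (hW : IsDyadicDiscretization (Wf w b) A B τ y) (hy : StrictMono y)
    (hA₀ : A ≠ 0) (hA : A ≠ ⊤) (hB : B ≠ 0) (hτ₀ : τ ≠ 0) (hτ : τ ≠ ⊤) {m : ℕ}
    (hm : B * 2⁻¹ ^ m ≤ A / 2) (hh : MonotoneOn h (erIoo (y 0) b)) (β : ℝ) :
    min ((A * 2⁻¹ ^ m) ^ (β - 1)) (B ^ (β - 1)) * (A / 2) *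
        ∑' j, (2⁻¹ ^ (j + 1) * τ) ^ β * h (y (j + 1)) ≤
      m * ∫⁻ x in erIoo (y 0) b, Wf w b x ^ (β - 1) * w x * h x := by
  have hyb := hW.coe_lt hA₀ hτ₀
  set F := fun x => Wf w b x ^ (β - 1) * w x * h x
  rw [← ENNReal.tsum_mul_left]
  calc ∑' j, min ((A * 2⁻¹ ^ m) ^ (β - 1)) (B ^ (β - 1)) * (A / 2) *
        ((2⁻¹ ^ (j + 1) * τ) ^ β * h (y (j + 1)))
      ≤ ∑' j, ∫⁻ x in Ioc (y (j + 1)) (y (j + 1 + m)), F x :=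
        ENNReal.tsum_le_tsum fun j => hW.le_setLIntegral_Ioc hA hB hτ₀ hτ hm β (j + 1)
          fun x hx => hh (hW.succ_mem_erIoo hy hA₀ hτ₀ j)
            (hy.monotone.Ioc_subset_erIoo hyb _ _ hx) hx.1.le
    _ ≤ m * ∑' j, ∫⁻ x in Ioc (y j) (y (j + 1)), F x := hy.monotone.tsum_setLIntegral_Ioc_le F m
    _ ≤ m * ∫⁻ x in erIoo (y 0) b, F x := by
        rw [hy.monotone.tsum_setLIntegral_Ioc]
        gcongr
        exact hy.monotone.iUnion_Ioc_subset_erIoo hyb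

theorem setLIntegral_le_tsum (hW : IsDyadicDiscretization (Wf w b) A B τ y) (hy : StrictMono y)
    (hw : Measurable w) (hA : A ≠ 0) (hB : B ≠ ⊤) (hτ₀ : τ ≠ 0) (hτ : τ ≠ ⊤)
    (hW₀ : ∀ x ∈ erIoo (y 0) b, Wf w b x ≠ 0) (hh : MonotoneOn h (erIoo (y 0) b)) (β : ℝ) :
    ∫⁻ x in erIoo (y 0) b, Wf w b x ^ (β - 1) * w x * h x ≤
      max (A ^ (β - 1)) ((2 * B) ^ (β - 1)) * (2 * B) *
        ∑' j, (2⁻¹ ^ (j + 1) * τ) ^ β * h (y (j + 1)) := by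
  set F := fun x => Wf w b x ^ (β - 1) * w x * h x
  rw [← ENNReal.tsum_mul_left]
  calc ∫⁻ x in erIoo (y 0) b, F x ≤ ∫⁻ x in ⋃ j, Ioc (y j) (y (j + 1)), F x :=
        lintegral_mono_set <| hy.monotone.erIoo_subset_iUnion_Ioc fun x hx =>
          hW.exists_le hB hτ (hW₀ x hx)
    _ = ∑' j, ∫⁻ x in Ioc (y j) (y (j + 1)), F x := (hy.monotone.tsum_setLIntegral_Ioc F).symm
    _ ≤ _ := ENNReal.tsum_le_tsum fun j => hW.setLIntegral_Ioc_le hw hA hτ₀ hτ β j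
        fun x hx => hh (hy.monotone.Ioc_subset_erIoo (hW.coe_lt hA hτ₀) _ _ hx)
          (hW.succ_mem_erIoo hy hA hτ₀ j) hx.2

end IsDyadicDiscretization

lemma tsum_subtype_le_eq_tsum_nat_add {α : Type*} [AddCommMonoid α] [TopologicalSpace α] (f : ℤ → α)
    (n : ℤ) : ∑' k : {k : ℤ // n ≤ k}, f k = ∑' j : ℕ, f (n + j) :=
  let e : ℕ ≃ {k : ℤ // n ≤ k} :=
    { toFun := fun j => ⟨n + j, by omega⟩
      invFun := fun k => (k.1 - n).toNat
      left_inv := fun j => by simp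
      right_inv := fun k => Subtype.ext (by have := k.2; simp; omega) }
  (e.tsum_eq fun k => f k).symm

lemma two_rpow_neg_intCast_add (n : ℤ) (j : ℕ) :
    (2 : ℝ≥0∞) ^ (-((n + j : ℤ) : ℝ)) = 2⁻¹ ^ j * 2 ^ (-(n : ℝ)) := by
  rw [Int.cast_add, Int.cast_natCast, neg_add, rpow_add _ _ two_ne_zero ofNat_ne_top, mul_comm,
    rpow_neg 2 (j : ℝ), rpow_natCast, ENNReal.inv_pow]

lemma tsum_subtype_two_rpow_mul_eq (β : ℝ) (g : ℤ → ℝ≥0∞) (n : ℤ) :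
    ∑' k : {k : ℤ // n + 1 ≤ k}, (2 : ℝ≥0∞) ^ (-((k : ℤ) : ℝ) * β) * g k =
      ∑' j : ℕ, (2⁻¹ ^ (j + 1) * 2 ^ (-(n : ℝ))) ^ β * g (n + (j + 1 : ℕ)) := by
  refine (tsum_subtype_le_eq_tsum_nat_add (fun k : ℤ => (2 : ℝ≥0∞) ^ (-(k : ℝ) * β) * g k) _).trans
    (tsum_congr fun j => ?_)
  rw [rpow_mul, ← two_rpow_neg_intCast_add]
  push_cast
  ring_nf

lemma IsDyadicDiscretization.of_int {W : ℝ → ℝ≥0∞} {A B : ℝ≥0∞} {N : WithBot ℤ} {xs : ℤ → ℝ}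
    (hW : ∀ k : ℤ, N ≤ (k : WithBot ℤ) →
      A * (2 : ℝ≥0∞) ^ (-(k : ℝ)) ≤ W (xs k) ∧ W (xs k) ≤ B * (2 : ℝ≥0∞) ^ (-(k : ℝ)))
    {n : ℤ} (hn : N ≤ (n : WithBot ℤ)) :
    IsDyadicDiscretization W A B (2 ^ (-(n : ℝ))) fun j => xs (n + j) := fun j => by
  simpa only [two_rpow_neg_intCast_add] using
    hW (n + j) (hn.trans (WithBot.coe_le_coe.2 (by omega)))

theorem antidiscretization_integral_general (β c₁ c₂ : ℝ) (hc₁ : 0 < c₁) (hc₂ : 0 < c₂) :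
    ∃ c C : ℝ, 0 < c ∧ 0 < C ∧
      ∀ (a : ℝ) (b : EReal), (a : EReal) < b → ∀ (w : ℝ → ℝ≥0∞), Measurable w →
        ∀ (N : WithBot ℤ) (xs : ℤ → ℝ),
        (∀ x : ℝ, x ∈ erIoo (a : EReal) b → 0 < Wf w b x ∧ Wf w b x < ∞) →
        (∀ k : ℤ, N ≤ (k : WithBot ℤ) → a ≤ xs k ∧ (xs k : EReal) ≤ b) →
        (∀ j k : ℤ, N ≤ (j : WithBot ℤ) → j < k → xs j < xs k) →
        (∀ k : ℤ, N ≤ (k : WithBot ℤ) →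
          ENNReal.ofReal c₁ * (2 : ℝ≥0∞) ^ (-(k : ℝ)) ≤ Wf w b (xs k) ∧
            Wf w b (xs k) ≤ ENNReal.ofReal c₂ * (2 : ℝ≥0∞) ^ (-(k : ℝ))) →
        (∀ n : ℤ, N = (n : WithBot ℤ) → xs n = a) →
        ∀ (h : ℝ → ℝ≥0∞), Measurable h → MonotoneOn h (erIoo (a : EReal) b) →
          ∀ n : ℤ, N ≤ (n : WithBot ℤ) →
            ENNReal.ofReal c *
                (∑' k : {k : ℤ // n + 1 ≤ k}, (2 : ℝ≥0∞) ^ (-((k : ℤ) : ℝ) * β) * h (xs k)) ≤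
              (∫⁻ x in erIoo ((xs n : ℝ) : EReal) b, Wf w b x ^ (β - 1) * w x * h x) ∧
            (∫⁻ x in erIoo ((xs n : ℝ) : EReal) b, Wf w b x ^ (β - 1) * w x * h x) ≤
              ENNReal.ofReal C *
                (∑' k : {k : ℤ // n + 1 ≤ k}, (2 : ℝ≥0∞) ^ (-((k : ℤ) : ℝ) * β) * h (xs k)) := by
  set A := ENNReal.ofReal c₁
  set B := ENNReal.ofReal c₂
  have hA₀ : A ≠ 0 := (ofReal_pos.2 hc₁).ne'
  obtain ⟨m, hm₀, hm⟩ := exists_pos_mul_inv_two_pow_le hA₀ (ofReal_ne_top (r := c₂))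
  set K := min ((A * 2⁻¹ ^ m) ^ (β - 1)) (B ^ (β - 1)) * (A / 2)
  set U := max (A ^ (β - 1)) ((2 * B) ^ (β - 1)) * (2 * B)
  have hK : K / m ≠ 0 ∧ K / m ≠ ⊤ := by
    simp [K, A, B, hc₁, hc₂, hm₀.ne', rpow_eq_zero_iff, rpow_eq_top_iff, div_eq_top, mul_eq_top]
  have hU : U ≠ 0 ∧ U ≠ ⊤ := by
    simp [U, A, B, hc₁, hc₂, rpow_eq_zero_iff, rpow_eq_top_iff, mul_eq_top, max_eq_top]
  refine ⟨(K / m).toReal, U.toReal, toReal_pos hK.1 hK.2, toReal_pos hU.1 hU.2, ?_⟩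
  intro a b _ w hw N xs hW hmem hsm hWk _ h _ hmono n hn
  set y : ℕ → ℝ := fun j => xs (n + j)
  have hdisc : IsDyadicDiscretization (Wf w b) A B (2 ^ (-(n : ℝ))) y := .of_int hWk hn
  have hy : StrictMono y := fun i j hij =>
    hsm (n + i) (n + j) (hn.trans (WithBot.coe_le_coe.2 (by omega))) (by omega)
  have hy₀ : xs n = y 0 := by simp [y]
  have hsub : erIoo (y 0) b ⊆ erIoo a b := fun x hx =>
    ⟨(EReal.coe_le_coe_iff.2 (hy₀ ▸ (hmem n hn).1)).trans_lt hx.1, hx.2⟩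
  have hτ₀ : (2 : ℝ≥0∞) ^ (-(n : ℝ)) ≠ 0 := by simp [rpow_eq_zero_iff]
  have hτ : (2 : ℝ≥0∞) ^ (-(n : ℝ)) ≠ ⊤ := rpow_ne_top_of_ne_zero two_ne_zero ofNat_ne_top
  rw [tsum_subtype_two_rpow_mul_eq β (fun k => h (xs k)), hy₀, ofReal_toReal hK.2,
    ofReal_toReal hU.2]
  constructor
  · rw [div_eq_mul_inv, mul_right_comm, ← div_eq_mul_inv]
    exact ENNReal.div_le_of_le_mul' (hdisc.tsum_le_setLIntegral hy hA₀ ofReal_ne_top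
      (ofReal_pos.2 hc₂).ne' hτ₀ hτ hm (hmono.mono hsub) β)
  · exact hdisc.setLIntegral_le_tsum hy hw hA₀ ofReal_ne_top hτ₀ hτ
      (fun x hx => (hW x (hsub hx)).1.ne') (hmono.mono hsub) β

theorem antidiscretization_integral (β c₁ c₂ : ℝ) (hβ : 0 < β) (hc₁ : 0 < c₁) (hc₂ : 0 < c₂) :
    ∃ c C : ℝ, 0 < c ∧ 0 < C ∧
      ∀ (a : ℝ) (b : EReal), (a : EReal) < b → ∀ (w : ℝ → ℝ≥0∞), Measurable w →
        ∀ (N : WithBot ℤ) (xs : ℤ → ℝ),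
        (∀ x : ℝ, x ∈ erIoo (a : EReal) b → 0 < Wf w b x ∧ Wf w b x < ∞) →
        (∀ k : ℤ, N ≤ (k : WithBot ℤ) → a ≤ xs k ∧ (xs k : EReal) ≤ b) →
        (∀ j k : ℤ, N ≤ (j : WithBot ℤ) → j < k → xs j < xs k) →
        (∀ k : ℤ, N ≤ (k : WithBot ℤ) →
          ENNReal.ofReal c₁ * (2 : ℝ≥0∞) ^ (-(k : ℝ)) ≤ Wf w b (xs k) ∧
            Wf w b (xs k) ≤ ENNReal.ofReal c₂ * (2 : ℝ≥0∞) ^ (-(k : ℝ))) →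
        (∀ n : ℤ, N = (n : WithBot ℤ) → xs n = a) →
        ∀ (h : ℝ → ℝ≥0∞), Measurable h → MonotoneOn h (erIoo (a : EReal) b) →
          ∀ n : ℤ, N ≤ (n : WithBot ℤ) →
            ENNReal.ofReal c *
                (∑' k : {k : ℤ // n + 1 ≤ k}, (2 : ℝ≥0∞) ^ (-((k : ℤ) : ℝ) * β) * h (xs k)) ≤
              (∫⁻ x in erIoo ((xs n : ℝ) : EReal) b, Wf w b x ^ (β - 1) * w x * h x) ∧
            (∫⁻ x in erIoo ((xs n : ℝ) : EReal) b, Wf w b x ^ (β - 1) * w x * h x) ≤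
              ENNReal.ofReal C *
                (∑' k : {k : ℤ // n + 1 ≤ k}, (2 : ℝ≥0∞) ^ (-((k : ℤ) : ℝ) * β) * h (xs k)) :=
  antidiscretization_integral_general β c₁ c₂ hc₁ hc₂
end
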